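/- arXiv:2208.00333 — 9 statements merged into one kernel-verified Lean document; each statement's English description precedes it below -/
import Mathlib

section
/- Let l ∈ {1, …, t} and δ ∈ F_q. If C_n^l is a run of δ's of length l, then C_{n−k_β}^{l−1} is a run of δ(1−β)'s of length l−1; that is, a_{n−k_β+i} = δ(1−β) for 0 ≤ i ≤ l−2, while a_{n−k_β−1} ≠ δ(1−β) and a_{n−k_β+l−1} ≠ δ(1−β). -/
/-!
Since `α⁻ᵏ = α - β`, multiplying by `γ αⁱ` and taking traces gives the relation
`a (i - k) = a (i + 1) - β a i`. Inside a run of `δ`'s this produces `δ - βδ`, and at either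
end of the run exactly one of the two terms leaves the run, so the value differs from `δ(1 - β)`
(on the left this uses `β ≠ 0`).
-/

/-- `C_n^l` is a run of `δ`'s of length `l` in the sequence `a`. -/
def IsRun {F : Type*} (a : ℤ → F) (δ : F) (n : ℤ) (l : ℕ) : Prop :=
  (∀ j : ℕ, j < l → a (n + j) = δ) ∧ a (n - 1) ≠ δ ∧ a (n + l) ≠ δ

theorem zpow_sub_eq_of_zpow_mul_sub_eq_one {E : Type*} [Field E] {α c : E} {k : ℤ}
    (hα : α ≠ 0) (hk : α ^ k * (α - c) = 1) (i : ℤ) :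
    α ^ (i - k) = α ^ (i + 1) - c * α ^ i := by
  have hinv : (α ^ k)⁻¹ = α - c := inv_eq_of_mul_eq_one_right hk
  rw [zpow_sub₀ hα, div_eq_mul_inv, hinv, zpow_add_one₀ hα]
  ring

theorem trace_mul_zpow_sub {F E : Type*} [Field F] [Field E] [Algebra F E]
    {α γ : E} {β : F} {k : ℤ} (hα : α ≠ 0) (hk : α ^ k * (α - algebraMap F E β) = 1) (i : ℤ) :
    Algebra.trace F E (γ * α ^ (i - k)) =
      Algebra.trace F E (γ * α ^ (i + 1)) - β * Algebra.trace F E (γ * α ^ i) := by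
  rw [zpow_sub_eq_of_zpow_mul_sub_eq_one hα hk, mul_sub, map_sub, mul_left_comm,
    ← Algebra.smul_def, map_smul, smul_eq_mul]

namespace IsRun

variable {F : Type*} [CommRing F] [IsDomain F] {a : ℤ → F} {δ β : F} {n k : ℤ} {l : ℕ}

theorem step_back (hrec : ∀ i, a (i - k) = a (i + 1) - β * a i) (hβ : β ≠ 0) (hl : 1 ≤ l)
    (hrun : IsRun a δ n l) : IsRun a (δ * (1 - β)) (n - k) (l - 1) := by
  obtain ⟨hmid, hleft, hright⟩ := hrun
  have hlast : ((l - 1 : ℕ) : ℤ) = l - 1 := by omega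
  refine ⟨fun j hj => ?_, ?_, ?_⟩
  · have hj₀ : a (n + j) = δ := hmid j (by omega)
    have hj₁ : a (n + j + 1) = δ := by
      simpa [add_assoc] using hmid (j + 1) (by omega)
    rw [sub_add_eq_add_sub, hrec, hj₀, hj₁]
    ring
  · have hfirst : a n = δ := by simpa using hmid 0 hl
    rw [sub_sub, add_comm k, ← sub_sub, hrec, sub_add_cancel, hfirst]
    intro h
    exact hleft (mul_left_cancel₀ hβ (by linear_combination -h))
  · have hend : a (n + l - 1) = δ := by
      simpa [hlast, add_sub_assoc] using hmid (l - 1) (by omega)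
    rw [hlast, show n - k + (l - 1) = n + l - 1 - k by ring, hrec, hend, sub_add_cancel]
    intro h
    exact hright (by linear_combination h)

end IsRun

theorem run_step_back_general
    (F E : Type*) [Field F] [Field E] [Algebra F E]
    (t : ℕ) (ht : 2 ≤ t)
    (α : E)
    (hdeg : (minpoly F α).natDegree = t)
    (γ : E)
    (a : ℤ → F) (ha : ∀ i : ℤ, a i = Algebra.trace F E (γ * α ^ i))
    (β : F) (hβ : β ≠ 0)
    (k : ℤ) (hk : α ^ k * (α - algebraMap F E β) = 1)
    (l : ℕ) (hl1 : 1 ≤ l)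
    (δ : F) (n : ℤ) (hrun : IsRun a δ n l) :
    IsRun a (δ * (1 - β)) (n - k) (l - 1) := by
  have hα : α ≠ 0 := by
    rintro rfl
    simp [minpoly.zero] at hdeg
    omega
  refine hrun.step_back (fun i => ?_) hβ hl1
  simp only [ha, trace_mul_zpow_sub hα hk]

/-- if `C_n^l` is a run of `δ`'s of length `l` (with `1 ≤ l ≤ t`),
then `C_{n-kβ}^{l-1}` is a run of `δ(1-β)`'s of length `l-1`. -/
theorem run_step_back
    (F E : Type*) [Field F] [Fintype F] [Field E] [Fintype E] [Algebra F E]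
    (t : ℕ) (ht : 2 ≤ t) (hrank : Module.finrank F E = t)
    (α : E) (hprim : ∀ x : E, x ≠ 0 → ∃ m : ℕ, α ^ m = x)
    (hdeg : (minpoly F α).natDegree = t)
    (γ : E) (hγ : γ ≠ 0)
    (a : ℤ → F) (ha : ∀ i : ℤ, a i = Algebra.trace F E (γ * α ^ i))
    (β : F) (hβ : β ≠ 0)
    (k : ℤ) (hk : α ^ k * (α - algebraMap F E β) = 1)
    (l : ℕ) (hl1 : 1 ≤ l) (hl2 : l ≤ t)
    (δ : F) (n : ℤ) (hrun : IsRun a δ n l) :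
    IsRun a (δ * (1 - β)) (n - k) (l - 1) :=
  run_step_back_general F E t ht α hdeg γ a ha β hβ k hk l hl1 δ n hrun
end

section
/- Let l ∈ {1, …, t}. If C_{n−k_β}^{l−1} is a run of zeroes of length l−1, then a_{n+i} = β^i · a_n for all 0 ≤ i ≤ l−1 (so C_n^l = (a_n, β a_n, β^2 a_n, …, β^{l−1} a_n)). Moreover, if l = t then a_n ≠ 0; consequently, if a_n ≠ 0 then a_{n+1}, …, a_{n+l−1} are all nonzero, and if a_n = 0 then they are all zero. -/
/-!
Since `α⁻ᵏ = α - β`, the trace sequence obeys `a (m + 1) = β * a m + a (m - k)`: along the run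
of zeroes starting at `n - k` the correction term vanishes, so `a` is geometric with ratio `β`
from `n` on. If the run has length `t - 1` and `a n = 0`, then `x ↦ Tr (γ αⁿ x)` vanishes on the
power basis `1, α, …, αᵗ⁻¹`, which contradicts the nondegeneracy of the trace form.
-/

open Module

theorem trace_mul_zpow_add_one {F E : Type*} [CommRing F] [Field E] [Algebra F E]
    {α : E} (hα : α ≠ 0) {β : F} {k : ℤ} (hk : α ^ k * (α - algebraMap F E β) = 1)
    (γ : E) (m : ℤ) :
    Algebra.trace F E (γ * α ^ (m + 1)) =
      β * Algebra.trace F E (γ * α ^ m) + Algebra.trace F E (γ * α ^ (m - k)) := by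
  have hinv : α ^ (-k) = α - algebraMap F E β := by
    rw [zpow_neg]
    exact inv_eq_of_mul_eq_one_right hk
  have hsplit : γ * α ^ (m + 1) = β • (γ * α ^ m) + γ * α ^ (m - k) := by
    rw [sub_eq_add_neg, zpow_add₀ hα, zpow_add₀ hα, hinv, zpow_one, Algebra.smul_def]
    ring
  rw [hsplit, map_add, map_smul, smul_eq_mul]

theorem eq_pow_mul_of_forall_eq_zero {R : Type*} [Semiring R] {a : ℤ → R} {β : R} {k n : ℤ}
    (hrec : ∀ m, a (m + 1) = β * a m + a (m - k)) {l : ℕ}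
    (hzero : ∀ j : ℕ, j < l - 1 → a (n - k + j) = 0) :
    ∀ i : ℕ, i < l → a (n + i) = β ^ i * a n := by
  intro i
  induction i with
  | zero => simp
  | succ j ih =>
    intro hj
    have hstep := hrec (n + j)
    rw [show n + j - k = n - k + j by ring, hzero j (by omega), add_zero] at hstep
    rw [Nat.cast_succ, ← add_assoc, hstep, ih (by omega), pow_succ', mul_assoc]

theorem PowerBasis.eq_zero_of_trace_mul_pow_eq_zero {F E : Type*} [Field F] [Field E]
    [Algebra F E] [Algebra.IsSeparable F E] (pb : PowerBasis F E) {x : E}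
    (hx : ∀ i < pb.dim, Algebra.trace F E (x * pb.gen ^ i) = 0) : x = 0 := by
  have := pb.finite
  have hform : Algebra.traceForm F E x = 0 :=
    pb.basis.ext fun i => by simpa [pb.coe_basis] using hx i i.2
  exact (traceForm_nondegenerate F E).1 x fun y => by
    simpa using LinearMap.congr_fun hform y

theorem eq_zero_of_trace_mul_pow_eq_zero {F E : Type*} [Field F] [Field E] [Algebra F E]
    [FiniteDimensional F E] [Algebra.IsSeparable F E] {α : E}
    (hα : (minpoly F α).natDegree = finrank F E) {x : E}
    (hx : ∀ i < finrank F E, Algebra.trace F E (x * α ^ i) = 0) : x = 0 := by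
  have hint := IsIntegral.of_finite F α
  have htop : Algebra.adjoin F {α} = ⊤ :=
    Algebra.adjoin_eq_top_of_primitive_element hint.isAlgebraic <|
      (Field.primitive_element_iff_minpoly_natDegree_eq F α).2 hα
  exact (PowerBasis.ofAdjoinEqTop hint htop).eq_zero_of_trace_mul_pow_eq_zero fun i hi =>
    hx i (hα ▸ hi)

theorem run_step_forward_general
    (F E : Type*) [Field F] [Fintype F] [Field E] [Fintype E] [Algebra F E]
    (t : ℕ) (ht : 2 ≤ t) (hrank : Module.finrank F E = t)
    (α : E)
    (hdeg : (minpoly F α).natDegree = t)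
    (γ : E) (hγ : γ ≠ 0)
    (a : ℤ → F) (ha : ∀ i : ℤ, a i = Algebra.trace F E (γ * α ^ i))
    (β : F) (hβ : β ≠ 0)
    (k : ℤ) (hk : α ^ k * (α - algebraMap F E β) = 1)
    (l : ℕ)
    (n : ℤ) (hrun : IsRun a (0 : F) (n - k) (l - 1)) :
    (∀ i : ℕ, i < l → a (n + i) = β ^ i * a n) ∧
    (l = t → a n ≠ 0) ∧
    (a n ≠ 0 → ∀ i : ℕ, 1 ≤ i → i < l → a (n + i) ≠ 0) ∧
    (a n = 0 → ∀ i : ℕ, 1 ≤ i → i < l → a (n + i) = 0) := by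
  have hα : α ≠ 0 := by
    rintro rfl
    rw [minpoly.zero, Polynomial.natDegree_X] at hdeg
    omega
  have hrec : ∀ m, a (m + 1) = β * a m + a (m - k) := fun m => by
    simp only [ha, trace_mul_zpow_add_one hα hk]
  have hgeom := eq_pow_mul_of_forall_eq_zero hrec hrun.1
  refine ⟨hgeom, ?_, fun han i _ hi => ?_, fun han i _ hi => ?_⟩
  · rintro rfl han
    apply mul_ne_zero hγ (zpow_ne_zero n hα)
    refine eq_zero_of_trace_mul_pow_eq_zero (hdeg.trans hrank.symm) fun i hi => ?_
    rw [mul_assoc, ← zpow_natCast, ← zpow_add₀ hα, ← ha, hgeom i (hrank ▸ hi), han, mul_zero]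
  · rw [hgeom i hi]
    exact mul_ne_zero (pow_ne_zero _ hβ) han
  · rw [hgeom i hi, han, mul_zero]

/-- if `C_{n-kβ}^{l-1}` is a run of zeroes of length `l-1`
(with `1 ≤ l ≤ t`), then `a (n+i) = β^i * a n` for `0 ≤ i ≤ l-1`; moreover
if `l = t` then `a n ≠ 0`; consequently if `a n ≠ 0` (resp. `a n = 0`) then
`a (n+1), …, a (n+l-1)` are all nonzero (resp. all zero). -/
theorem run_step_forward
    (F E : Type*) [Field F] [Fintype F] [Field E] [Fintype E] [Algebra F E]
    (t : ℕ) (ht : 2 ≤ t) (hrank : Module.finrank F E = t)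
    (α : E) (hprim : ∀ x : E, x ≠ 0 → ∃ m : ℕ, α ^ m = x)
    (hdeg : (minpoly F α).natDegree = t)
    (γ : E) (hγ : γ ≠ 0)
    (a : ℤ → F) (ha : ∀ i : ℤ, a i = Algebra.trace F E (γ * α ^ i))
    (β : F) (hβ : β ≠ 0)
    (k : ℤ) (hk : α ^ k * (α - algebraMap F E β) = 1)
    (l : ℕ) (hl1 : 1 ≤ l) (hl2 : l ≤ t)
    (n : ℤ) (hrun : IsRun a (0 : F) (n - k) (l - 1)) :
    (∀ i : ℕ, i < l → a (n + i) = β ^ i * a n) ∧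
    (l = t → a n ≠ 0) ∧
    (a n ≠ 0 → ∀ i : ℕ, 1 ≤ i → i < l → a (n + i) ≠ 0) ∧
    (a n = 0 → ∀ i : ℕ, 1 ≤ i → i < l → a (n + i) = 0) :=
  run_step_forward_general F E t ht hrank α hdeg γ hγ a ha β hβ k hk l n hrun
end

section
/- Let l ∈ {2, …, t} and suppose β = 1, i.e., k_1 ∈ ℤ satisfies α^{k_1}(α − 1) = 1. If C_{n−k_1}^{l−1} is a run of zeroes of length l−1, then C_n^l is a run of a_n's of length l; that is, a_{n+i} = a_n for all 0 ≤ i ≤ l−1, while a_{n−1} ≠ a_n and a_{n+l} ≠ a_n. -/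
theorem zpow_add_one_sub_zpow_of_zpow_mul_sub_one {K : Type*} [DivisionRing K] {α : K}
    (hα : α ≠ 0) {k : ℤ} (hk : α ^ k * (α - 1) = 1) (i : ℤ) :
    α ^ (i + 1) - α ^ i = α ^ (i - k) := by
  have hneg : α ^ (-k) = α - 1 := by rw [zpow_neg, inv_eq_of_mul_eq_one_right hk]
  rw [sub_eq_add_neg i, zpow_add₀ hα i (-k), hneg, mul_sub, mul_one, zpow_add_one₀ hα]

section DifferenceEquation

variable {G : Type*} [AddCommGroup G] {a : ℤ → G} {k : ℤ}

theorem eq_of_isRun_zero_shift (hstep : ∀ i, a (i + 1) - a i = a (i - k)) {n : ℤ} {l : ℕ}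
    (hrun : IsRun a 0 (n - k) (l - 1)) {j : ℕ} (hj : j < l) : a (n + j) = a n := by
  induction j with
  | zero => simp
  | succ j ih =>
    have hzero : a (n + j - k) = 0 := by
      rw [show n + j - k = n - k + j by ring]
      exact hrun.1 j (by omega)
    rw [← ih (by omega), ← sub_eq_zero, Nat.cast_succ, ← add_assoc, hstep, hzero]

theorem IsRun.of_isRun_zero_shift (hstep : ∀ i, a (i + 1) - a i = a (i - k)) {n : ℤ} {l : ℕ}
    (hl : 1 ≤ l) (hrun : IsRun a 0 (n - k) (l - 1)) : IsRun a (a n) n l := by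
  have hconst : ∀ j < l, a (n + j) = a n := fun j hj => eq_of_isRun_zero_shift hstep hrun hj
  refine ⟨hconst, fun h => hrun.2.1 ?_, fun h => hrun.2.2 ?_⟩
  · have hs := hstep (n - 1)
    rwa [sub_add_cancel, h, sub_self, sub_right_comm, eq_comm] at hs
  · have hs := hstep (n + (l - 1 : ℕ))
    rwa [hconst (l - 1) (by omega), show n + (l - 1 : ℕ) + 1 = n + l by omega, h, sub_self,
      show n + (l - 1 : ℕ) - k = n - k + (l - 1 : ℕ) by ring, eq_comm] at hs

end DifferenceEquation

theorem run_step_forward_beta_one_general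
    (F E : Type*) [Field F] [Field E] [Algebra F E]
    (t : ℕ) (ht : 2 ≤ t)
    (α : E)
    (hdeg : (minpoly F α).natDegree = t)
    (γ : E)
    (a : ℤ → F) (ha : ∀ i : ℤ, a i = Algebra.trace F E (γ * α ^ i))
    (k : ℤ) (hk : α ^ k * (α - 1) = 1)
    (l : ℕ) (hl1 : 2 ≤ l)
    (n : ℤ) (hrun : IsRun a (0 : F) (n - k) (l - 1)) :
    IsRun a (a n) n l := by
  have hα : α ≠ 0 := by
    rintro rfl
    rw [minpoly.zero, Polynomial.natDegree_X] at hdeg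
    omega
  have hstep : ∀ i, a (i + 1) - a i = a (i - k) := fun i => by
    rw [ha, ha, ha, ← map_sub, ← mul_sub, zpow_add_one_sub_zpow_of_zpow_mul_sub_one hα hk]
  exact IsRun.of_isRun_zero_shift hstep (by omega) hrun

/-- taking `β = 1` (so `α^{k₁}(α - 1) = 1`), if `C_{n-k₁}^{l-1}`
is a run of zeroes of length `l-1` (with `2 ≤ l ≤ t`), then `C_n^l` is a run
of `a n`'s of length `l`. -/
theorem run_step_forward_beta_one
    (F E : Type*) [Field F] [Fintype F] [Field E] [Fintype E] [Algebra F E]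
    (t : ℕ) (ht : 2 ≤ t) (hrank : Module.finrank F E = t)
    (α : E) (hprim : ∀ x : E, x ≠ 0 → ∃ m : ℕ, α ^ m = x)
    (hdeg : (minpoly F α).natDegree = t)
    (γ : E) (hγ : γ ≠ 0)
    (a : ℤ → F) (ha : ∀ i : ℤ, a i = Algebra.trace F E (γ * α ^ i))
    (k : ℤ) (hk : α ^ k * (α - 1) = 1)
    (l : ℕ) (hl1 : 2 ≤ l) (hl2 : l ≤ t)
    (n : ℤ) (hrun : IsRun a (0 : F) (n - k) (l - 1)) :
    IsRun a (a n) n l :=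
  run_step_forward_beta_one_general F E t ht α hdeg γ a ha k hk l hl1 n hrun
end

section
/- Let t ≥ 3, l ∈ {0, …, t−3}, and suppose C_n^l is a run of zeroes of length l. Then a_{n+k_β+j} = β^j · a_{n+k_β} for j = 1, …, l, and a_{n+k_β+j} = ∑_{i=l}^{j−1} β^{j−i−1} a_{n+i} + β^j a_{n+k_β} for j = l+1, …, t. -/
/-!
Multiplying `α ^ k * (α - β) = 1` by `α ^ i` gives `α ^ (k + i + 1) = β α ^ (k + i) + α ^ i`, and
applying the `F`-linear functional `x ↦ Tr (γ x)` turns this into the first-order recurrence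
`a (n + k + j + 1) = β a (n + k + j) + a (n + j)`. Its variation-of-constants solution is
`a (n + k + j) = ∑_{i < j} β ^ (j - i - 1) a (n + i) + β ^ j a (n + k)`, in which the terms with
`i < l` vanish along the run of zeroes.
-/

open Finset

section LinearRecurrence

variable {R : Type*} [CommSemiring R] (b : R) {x y : ℕ → R}

theorem eq_sum_range_of_succ_eq_mul_add (hxy : ∀ j, x (j + 1) = b * x j + y j) (j : ℕ) :
    x j = ∑ i ∈ range j, b ^ (j - i - 1) * y i + b ^ j * x 0 := by
  induction j with
  | zero => simp
  | succ j ih =>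
    have hshift : ∀ i ∈ range j, b * (b ^ (j - i - 1) * y i) = b ^ (j + 1 - i - 1) * y i := by
      intro i hi
      rw [← mul_assoc, ← pow_succ', show j + 1 - i - 1 = j - i - 1 + 1 by grind]
    rw [hxy, ih, mul_add, mul_sum, sum_congr rfl hshift, sum_range_succ,
      show j + 1 - j - 1 = 0 by omega, pow_zero, one_mul, pow_succ]
    ring

theorem eq_sum_Ico_of_succ_eq_mul_add (hxy : ∀ j, x (j + 1) = b * x j + y j) {l : ℕ}
    (hy : ∀ i < l, y i = 0) (j : ℕ) :
    x j = ∑ i ∈ Ico l j, b ^ (j - i - 1) * y i + b ^ j * x 0 := by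
  rw [eq_sum_range_of_succ_eq_mul_add b hxy j, range_eq_Ico]
  congr 1
  refine (sum_subset (Ico_subset_Ico_left l.zero_le) fun i hi hil => ?_).symm
  rw [hy i (by grind), mul_zero]

end LinearRecurrence

theorem zpow_add_add_one_of_zpow_mul_sub_eq_one {E : Type*} [Field E] {α b : E} (hα : α ≠ 0)
    {k : ℤ} (hk : α ^ k * (α - b) = 1) (i : ℤ) :
    α ^ (k + i + 1) = b * α ^ (k + i) + α ^ i := by
  rw [zpow_add_one₀ hα, zpow_add₀ hα]
  linear_combination α ^ i * hk

theorem functional_zpow_add_add_one {F E : Type*} [Field F] [Field E] [Algebra F E]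
    (L : E →ₗ[F] F) {α : E} (hα : α ≠ 0) {β : F} {k : ℤ}
    (hk : α ^ k * (α - algebraMap F E β) = 1) (γ : E) (i : ℤ) :
    L (γ * α ^ (k + i + 1)) = β * L (γ * α ^ (k + i)) + L (γ * α ^ i) := by
  rw [zpow_add_add_one_of_zpow_mul_sub_eq_one hα hk, mul_add, mul_left_comm, ← Algebra.smul_def,
    map_add, map_smul, smul_eq_mul]

theorem run_forward_expansion_general
    (F E : Type*) [Field F] [Field E] [Algebra F E]
    (t : ℕ) (ht : 3 ≤ t)
    (α : E)
    (hdeg : (minpoly F α).natDegree = t)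
    (γ : E)
    (a : ℤ → F) (ha : ∀ i : ℤ, a i = Algebra.trace F E (γ * α ^ i))
    (β : F)
    (k : ℤ) (hk : α ^ k * (α - algebraMap F E β) = 1)
    (l : ℕ)
    (n : ℤ) (hrun : IsRun a (0 : F) n l) :
    (∀ j : ℕ, 1 ≤ j → j ≤ l → a (n + k + j) = β ^ j * a (n + k)) ∧
    (∀ j : ℕ, l + 1 ≤ j → j ≤ t →
      a (n + k + j) =
        (∑ i ∈ Finset.Ico l j, β ^ (j - i - 1) * a (n + i)) + β ^ j * a (n + k)) := by
  have hα : α ≠ 0 := by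
    rintro rfl
    have := minpoly.natDegree_eq_one_iff.mpr ⟨(0 : F), map_zero (algebraMap F E)⟩
    omega
  have hrec : ∀ j : ℕ, a (n + k + (j + 1 : ℕ)) = β * a (n + k + j) + a (n + j) := by
    intro j
    simpa only [ha, Nat.cast_succ, add_assoc, add_left_comm k] using
      functional_zpow_add_add_one (Algebra.trace F E) hα hk γ (n + j)
  have hsol := eq_sum_Ico_of_succ_eq_mul_add β (x := fun j : ℕ => a (n + k + j)) hrec hrun.1
  simp only [Nat.cast_zero, add_zero] at hsol
  refine ⟨fun j _ hjl => ?_, fun j _ _ => hsol j⟩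
  rw [hsol, Ico_eq_empty_of_le hjl, sum_empty, zero_add]

/-- if `C_n^l` is a run of zeroes of length `l` (with
`0 ≤ l ≤ t-3`), then `a (n+kβ+j) = β^j a (n+kβ)` for `j = 1, …, l`, and
`a (n+kβ+j) = ∑_{i=l}^{j-1} β^{j-i-1} a (n+i) + β^j a (n+kβ)` for
`j = l+1, …, t`. -/
theorem run_forward_expansion
    (F E : Type*) [Field F] [Fintype F] [Field E] [Fintype E] [Algebra F E]
    (t : ℕ) (ht : 3 ≤ t) (hrank : Module.finrank F E = t)
    (α : E) (hprim : ∀ x : E, x ≠ 0 → ∃ m : ℕ, α ^ m = x)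
    (hdeg : (minpoly F α).natDegree = t)
    (γ : E) (hγ : γ ≠ 0)
    (a : ℤ → F) (ha : ∀ i : ℤ, a i = Algebra.trace F E (γ * α ^ i))
    (β : F) (hβ : β ≠ 0)
    (k : ℤ) (hk : α ^ k * (α - algebraMap F E β) = 1)
    (l : ℕ) (hl : l ≤ t - 3)
    (n : ℤ) (hrun : IsRun a (0 : F) n l) :
    (∀ j : ℕ, 1 ≤ j → j ≤ l → a (n + k + j) = β ^ j * a (n + k)) ∧
    (∀ j : ℕ, l + 1 ≤ j → j ≤ t →
      a (n + k + j) =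
        (∑ i ∈ Finset.Ico l j, β ^ (j - i - 1) * a (n + i)) + β ^ j * a (n + k)) :=
  run_forward_expansion_general F E t ht α hdeg γ a ha β k hk l n hrun
end

section
/- Let t ≥ 3, l ∈ {0, …, t−3}, and suppose C_n^l is a run of zeroes of length l. Then β is a root of the polynomial a_{n+k_β}·f(x) + P(x) ∈ F_q[x], where P(x) = ∑_{j=0}^{t−l−1} c_{j+l+1} ∑_{i=0}^{j} a_{n+l+j−i} x^i with the convention c_t = 1. -/
open Polynomial

/-!
Write `f = ∑ c_m X^m`. Since `f(α) = 0`,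
`f(β) = f(β) - f(α) = (β - α) ∑_m c_m ∑_{i<m} β^i α^{m-1-i}`, and `α^k (α - β) = 1` turns
`α^{n+k} (β - α)` into `-α^n`. Multiplying by `γ α^{n+k}` and taking traces gives
`a_{n+k} f(β) = -∑_m c_m ∑_{i<m} β^i a_{n+m-1-i}`. In this double sum every term with
`m - 1 - i < l` is a term of the run of zeroes, and what is left is exactly `P(β)`.
-/

open Finset

theorem sum_mul_pow_sub_sum_mul_pow {R : Type*} [CommRing R] (c : ℕ → R) (N : ℕ) (x y : R) :
    ∑ m ∈ range N, c m * x ^ m - ∑ m ∈ range N, c m * y ^ m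
      = (x - y) * ∑ m ∈ range N, c m * ∑ i ∈ range m, x ^ i * y ^ (m - 1 - i) := by
  rw [← sum_sub_distrib, mul_sum]
  refine sum_congr rfl fun m _ => ?_
  rw [← mul_sub, ← geom_sum₂_mul x y m]
  ring

theorem sum_range_succ_eq_sum_range_sub_of_eq_zero {M : Type*} [AddCommMonoid M] (g : ℕ → M)
    (l t : ℕ) (hg : ∀ m ≤ l, g m = 0) :
    ∑ m ∈ range (t + 1), g m = ∑ j ∈ range (t - l), g (j + l + 1) := by
  calc ∑ m ∈ range (t + 1), g m = ∑ m ∈ Ico (l + 1) (t + 1), g m := by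
        refine (sum_subset (fun m hm => ?_) fun m hm hm' => hg m ?_).symm
        · simp only [mem_Ico, mem_range] at hm ⊢; omega
        · simp only [mem_Ico, mem_range, not_and, not_lt] at hm hm'; omega
    _ = ∑ j ∈ range (t - l), g (l + 1 + j) := by
        rw [sum_Ico_eq_sum_range, Nat.add_sub_add_right]
    _ = ∑ j ∈ range (t - l), g (j + l + 1) :=
        sum_congr rfl fun j _ => congrArg g (by omega)

theorem sum_range_mul_sum_eq_of_zero_run {R : Type*} [CommSemiring R] (a : ℤ → R) (n : ℤ)
    (l : ℕ) (hrun : ∀ j : ℕ, j < l → a (n + j) = 0) (c : ℕ → R) (b : R) (t : ℕ) :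
    ∑ m ∈ range (t + 1), c m * ∑ i ∈ range m, a (n + ↑(m - 1 - i)) * b ^ i
      = ∑ j ∈ range (t - l), c (j + l + 1) * ∑ i ∈ range (j + 1), a (n + l + j - i) * b ^ i := by
  have hinner : ∀ m, ∑ i ∈ range m, a (n + ↑(m - 1 - i)) * b ^ i
      = ∑ i ∈ range (m - l), a (n + ↑(m - 1 - i)) * b ^ i := fun m => by
    refine (sum_subset (range_subset_range.mpr (Nat.sub_le m l)) fun i hi hi' => ?_).symm
    simp only [mem_range, not_lt] at hi hi'
    rw [hrun _ (by omega), zero_mul]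
  rw [sum_range_succ_eq_sum_range_sub_of_eq_zero _ l t fun m hm => by
    rw [hinner, Nat.sub_eq_zero_of_le hm, sum_range_zero, mul_zero]]
  refine sum_congr rfl fun j _ => ?_
  rw [hinner, show j + l + 1 - l = j + 1 by omega]
  refine congrArg _ (sum_congr rfl fun i hi => ?_)
  rw [mem_range] at hi
  congr 2
  omega

section LinearRecurrence

variable {F E : Type*} [Field F] [Field E] [Algebra F E]

theorem ne_zero_of_minpoly_eq {α : E} {t : ℕ} (ht : t ≠ 1) (c : ℕ → F)
    (hmin : minpoly F α = X ^ t + ∑ j ∈ range t, C (c j) * X ^ j) : α ≠ 0 := by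
  rintro rfl
  have h := congrArg (coeff · t) hmin
  simp [minpoly.zero, coeff_X, coeff_X_pow, ht.symm] at h

theorem mul_sum_pow_eq_neg_sum_of_sum_pow_eq_zero (τ : E →ₗ[F] F) (γ : E) {α : E} (hα : α ≠ 0)
    (a : ℤ → F) (ha : ∀ i, a i = τ (γ * α ^ i))
    (c : ℕ → F) (N : ℕ) (hroot : ∑ m ∈ range N, algebraMap F E (c m) * α ^ m = 0)
    (b : F) (k : ℤ) (hk : α ^ k * (α - algebraMap F E b) = 1) (n : ℤ) :
    a (n + k) * ∑ m ∈ range N, c m * b ^ m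
      = -∑ m ∈ range N, c m * ∑ i ∈ range m, a (n + ↑(m - 1 - i)) * b ^ i := by
  set b' := algebraMap F E b
  set S := ∑ m ∈ range N, algebraMap F E (c m) * ∑ i ∈ range m, b' ^ i * α ^ (m - 1 - i)
  have hshift : α ^ (n + k) * (b' - α) = -α ^ n := by
    rw [zpow_add₀ hα, mul_assoc, ← neg_sub, mul_neg, hk, mul_neg_one]
  have hfb : algebraMap F E (∑ m ∈ range N, c m * b ^ m) = (b' - α) * S := by
    rw [← sum_mul_pow_sub_sum_mul_pow, hroot, sub_zero]
    simp only [map_sum, map_mul, map_pow, b']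
  have hE : (∑ m ∈ range N, c m * b ^ m) • (γ * α ^ (n + k))
      = -∑ m ∈ range N, c m • ∑ i ∈ range m, b ^ i • (γ * α ^ (n + ↑(m - 1 - i))) := by
    calc (∑ m ∈ range N, c m * b ^ m) • (γ * α ^ (n + k)) = -(γ * α ^ n * S) := by
          rw [Algebra.smul_def, hfb]; linear_combination (γ * S) * hshift
      _ = _ := by
          simp only [S, Algebra.smul_def, mul_sum, zpow_add₀ hα, zpow_natCast, map_pow, b']
          congr 1
          exact sum_congr rfl fun m _ => sum_congr rfl fun i _ => by ring
  have hτ := congrArg τ hE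
  simp only [map_neg, map_sum, map_smul, smul_eq_mul, ← ha] at hτ
  rw [mul_comm, hτ]
  simp only [mul_comm (b ^ _)]

end LinearRecurrence

theorem beta_root_of_combined_poly_general
    (F E : Type*) [Field F] [Field E] [Algebra F E]
    (t : ℕ) (ht : 3 ≤ t)
    (α : E)
    (c : ℕ → F)
    (hmin : minpoly F α = X ^ t + ∑ j ∈ Finset.range t, C (c j) * X ^ j)
    (hct : c t = 1)
    (γ : E)
    (a : ℤ → F) (ha : ∀ i : ℤ, a i = Algebra.trace F E (γ * α ^ i))
    (β : F)
    (k : ℤ) (hk : α ^ k * (α - algebraMap F E β) = 1)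
    (l : ℕ)
    (n : ℤ) (hrun : IsRun a (0 : F) n l)
    (P : Polynomial F)
    (hP : P = ∑ j ∈ Finset.range (t - l), C (c (j + l + 1)) *
        ∑ i ∈ Finset.range (j + 1), C (a (n + l + j - i)) * X ^ i) :
    (C (a (n + k)) * minpoly F α + P).eval β = 0 := by
  have hα : α ≠ 0 := ne_zero_of_minpoly_eq (by omega) c hmin
  have hf : minpoly F α = ∑ m ∈ range (t + 1), C (c m) * X ^ m := by
    rw [hmin, sum_range_succ, hct, C_1, one_mul, add_comm]
  have hroot : ∑ m ∈ range (t + 1), algebraMap F E (c m) * α ^ m = 0 := by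
    simpa only [hf, map_sum, map_mul, aeval_C, map_pow, aeval_X] using minpoly.aeval F α
  simp only [eval_add, eval_mul, eval_C, hf, hP, eval_finsetSum, eval_pow, eval_X]
  rw [mul_sum_pow_eq_neg_sum_of_sum_pow_eq_zero (Algebra.trace F E) γ hα a ha c _ hroot β k hk n,
    sum_range_mul_sum_eq_of_zero_run a n l hrun.1, neg_add_cancel]

/-- if `C_n^l` is a run of zeroes of length `l` (with
`0 ≤ l ≤ t-3`), then `β` is a root of the polynomial
`a_{n+kβ}·f(x) + P(x)`, where
`P(x) = ∑_{j=0}^{t-l-1} c_{j+l+1} ∑_{i=0}^{j} a_{n+l+j-i} x^i` (with `c_t = 1`). -/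
theorem beta_root_of_combined_poly
    (F E : Type*) [Field F] [Fintype F] [Field E] [Fintype E] [Algebra F E]
    (t : ℕ) (ht : 3 ≤ t) (hrank : Module.finrank F E = t)
    (α : E) (hprim : ∀ x : E, x ≠ 0 → ∃ m : ℕ, α ^ m = x)
    (c : ℕ → F)
    (hmin : minpoly F α = X ^ t + ∑ j ∈ Finset.range t, C (c j) * X ^ j)
    (hct : c t = 1)
    (γ : E) (hγ : γ ≠ 0)
    (a : ℤ → F) (ha : ∀ i : ℤ, a i = Algebra.trace F E (γ * α ^ i))
    (β : F) (hβ : β ≠ 0)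
    (k : ℤ) (hk : α ^ k * (α - algebraMap F E β) = 1)
    (l : ℕ) (hl : l ≤ t - 3)
    (n : ℤ) (hrun : IsRun a (0 : F) n l)
    (P : Polynomial F)
    (hP : P = ∑ j ∈ Finset.range (t - l), C (c (j + l + 1)) *
        ∑ i ∈ Finset.range (j + 1), C (a (n + l + j - i)) * X ^ i) :
    (C (a (n + k)) * minpoly F α + P).eval β = 0 :=
  beta_root_of_combined_poly_general F E t ht α c hmin hct γ a ha β k hk l n hrun P hP
end

section
/- Let t ≥ 3, l ∈ {0, …, t−3}, and suppose C_n^l is a run of zeroes of length l. Let z ≥ 0 be the integer such that a_{n+j·k_β} = 0 for all 1 ≤ j ≤ z and a_{n+(z+1)·k_β} ≠ 0. Then z equals the multiplicity of β as a root of the polynomial P(x) = ∑_{j=0}^{t−l−1} c_{j+l+1} ∑_{i=0}^{j} a_{n+l+j−i} x^i ∈ F_q[x], with the convention c_t = 1. -/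
/-!
Let `f` be the minimal polynomial of `α` and `L x = Tr(γ α^n x)`, an `F`-linear form with
`L(α^i) = a_{n+i}`. Because `a_n = ⋯ = a_{n+l-1} = 0`, the coefficients of `P` are the images
under `L` of those of `H = f / (X - α) ∈ E[X]`. Shifting by `β` gives
`(X - (α - β)) H(X + β) = f(X + β)`, and `(α - β)⁻¹ = α^{k_β}` turns this into
`P(X + β) = -∑_m (∑_{i ≤ m} f_i a_{n + (m - i + 1) k_β}) X^m`,
where `f(X + β) = ∑ f_i X^i`.
Since `f` is irreducible of degree `t ≥ 2`, `f_0 = f(β) ≠ 0`, so the first nonzero coefficient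
of `P(X + β)` is the `z`-th one.
-/

open Polynomial

open Finset

namespace Polynomial

lemma coeff_X_pow_add_sum_C_mul_X_pow {R : Type*} [Semiring R] {t : ℕ} {c : ℕ → R}
    (hct : c t = 1) (i : ℕ) :
    (X ^ t + ∑ j ∈ range t, C (c j) * X ^ j).coeff i = if i ≤ t then c i else 0 := by
  simp only [coeff_add, coeff_X_pow, finsetSum_coeff, coeff_C_mul_X_pow, sum_ite_eq, mem_range]
  rcases lt_trichotomy i t with hi | rfl | hi
  · simp [hi, hi.ne, hi.le]
  · simp [hct]
  · simp [hi.ne', not_lt_of_gt hi, not_le_of_gt hi]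

lemma coeff_sum_C_mul_sum_of_run {R : Type*} [Semiring R] (c : ℕ → R) (a : ℤ → R) (n : ℤ)
    (t l : ℕ) (hrun : ∀ j : ℕ, j < l → a (n + j) = 0) (m : ℕ) :
    (∑ j ∈ range (t - l), C (c (j + l + 1)) *
        ∑ i ∈ range (j + 1), C (a (n + l + j - i)) * X ^ i).coeff m =
      ∑ i ∈ Icc (m + 1) t, c i * a (n + (i - (m + 1) : ℕ)) := by
  simp only [finsetSum_coeff, coeff_C_mul, coeff_X_pow, mul_ite, mul_one, mul_zero,
    sum_ite_eq, mem_range]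
  refine sum_bij_ne_zero (fun j _ _ ↦ j + l + 1) ?_ (by simp) ?_ ?_
  · intro j hj hne
    have : m < j + 1 := by by_contra h; simp [h] at hne
    simp only [mem_range] at hj
    simp only [mem_Icc]; omega
  · intro i hi hne
    simp only [mem_Icc] at hi
    have hli : l ≤ i - (m + 1) := by
      by_contra h; exact hne (by rw [hrun _ (by omega), mul_zero])
    refine ⟨i - l - 1, by simp only [mem_range]; omega, ?_, by omega⟩
    rwa [if_pos (by omega), show i - l - 1 + l + 1 = i by omega,
      show n + l + (i - l - 1 : ℕ) - m = n + (i - (m + 1) : ℕ) by omega]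
  · intro j _ hne
    have : m < j + 1 := by by_contra h; simp [h] at hne
    rw [if_pos this]
    congr 2; omega

lemma coeff_taylor_of_coeff_eq_linearMap {R A : Type*} [CommSemiring R] [CommSemiring A]
    [Algebra R A] (L : A →ₗ[R] R) {p : A[X]} {q : R[X]} (hq : ∀ j, q.coeff j = L (p.coeff j))
    (r : R) (m : ℕ) :
    (taylor r q).coeff m = L ((taylor (algebraMap R A r) p).coeff m) := by
  have hNq : (hasseDeriv m q).natDegree < q.natDegree + p.natDegree + 1 :=
    (natDegree_hasseDeriv_le q m).trans_lt (by omega)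
  have hNp : (hasseDeriv m p).natDegree < q.natDegree + p.natDegree + 1 :=
    (natDegree_hasseDeriv_le p m).trans_lt (by omega)
  rw [taylor_coeff, taylor_coeff, eval_eq_sum_range' hNq, eval_eq_sum_range' hNp, map_sum]
  refine sum_congr rfl fun i _ ↦ ?_
  have hsmul : ((i + m).choose m : A) * p.coeff (i + m) * algebraMap R A r ^ i =
      (((i + m).choose m : R) * r ^ i) • p.coeff (i + m) := by
    rw [Algebra.smul_def, map_mul, map_natCast, map_pow]; ring
  rw [hasseDeriv_coeff, hasseDeriv_coeff, hq, hsmul, map_smul, smul_eq_mul]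
  ring

lemma coeff_eq_neg_sum_of_X_sub_C_mul_eq {R : Type*} [CommRing R] {d e : R} (hde : e * d = 1)
    {T Q : R[X]} (h : (X - C d) * T = Q) (m : ℕ) :
    T.coeff m = -∑ i ∈ range (m + 1), Q.coeff i * e ^ (m - i + 1) := by
  induction m with
  | zero =>
    have h0 := congrArg (coeff · 0) h
    simp only [sub_mul, coeff_sub, mul_coeff_zero, coeff_X_zero, zero_mul, coeff_C_zero] at h0
    simp only [zero_add, sum_range_one, ← h0]
    linear_combination (-T.coeff 0) * hde
  | succ m ih =>
    have hs := congrArg (coeff · (m + 1)) h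
    simp only [sub_mul, coeff_sub, coeff_X_mul, coeff_C_mul] at hs
    rw [sum_range_succ, ← hs, Nat.sub_self, zero_add, pow_one]
    have hsum : ∑ i ∈ range (m + 1), Q.coeff i * e ^ (m + 1 - i + 1) =
        (∑ i ∈ range (m + 1), Q.coeff i * e ^ (m - i + 1)) * e := by
      rw [sum_mul]
      refine sum_congr rfl fun i hi ↦ ?_
      rw [show m + 1 - i + 1 = m - i + 1 + 1 by rw [mem_range] at hi; omega, pow_succ, mul_assoc]
    rw [hsum]
    linear_combination e * ih - T.coeff (m + 1) * hde

lemma rootMultiplicity_eq_of_coeff_taylor {R : Type*} [CommRing R] {p : R[X]} {r : R} {z : ℕ}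
    (hlt : ∀ m < z, (taylor r p).coeff m = 0) (hz : (taylor r p).coeff z ≠ 0) :
    p.rootMultiplicity r = z := by
  have hp : taylor r p ≠ 0 := fun h ↦ hz (by rw [h, coeff_zero])
  rw [rootMultiplicity_eq_natTrailingDegree, ← taylor_apply]
  exact le_antisymm (natTrailingDegree_le_of_ne_zero hz) (le_natTrailingDegree hp hlt)

lemma rootMultiplicity_eq_of_coeff_taylor_eq_neg_sum {R : Type*} [CommRing R] [NoZeroDivisors R]
    {P : R[X]} {r : R} {p w : ℕ → R} {z : ℕ}
    (hP : ∀ m, (taylor r P).coeff m = -∑ i ∈ range (m + 1), p i * w (m - i + 1))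
    (hp : p 0 ≠ 0) (hw : ∀ j, 1 ≤ j → j ≤ z → w j = 0) (hwz : w (z + 1) ≠ 0) :
    P.rootMultiplicity r = z := by
  refine rootMultiplicity_eq_of_coeff_taylor (fun m hm ↦ ?_) ?_
  · rw [hP, sum_eq_zero fun i hi ↦ by
      rw [hw _ le_add_self (by simp only [mem_range] at hi; omega), mul_zero], neg_zero]
  · rw [hP, sum_range_succ', sum_eq_zero fun i hi ↦ by
      rw [hw _ le_add_self (by simp only [mem_range] at hi; omega), mul_zero], zero_add,
      Nat.sub_zero, neg_ne_zero]
    exact mul_ne_zero hp hwz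

end Polynomial

section TraceForm

variable {F E : Type*}

lemma coeff_sum_run_eq_coeff_divByMonic [Field F] [Field E] [Algebra F E] {α : E}
    (L : E →ₗ[F] F) {a : ℤ → F} {n : ℤ} (hL : ∀ i : ℕ, L (α ^ i) = a (n + i))
    {f : F[X]} {c : ℕ → F} {t : ℕ} (hdeg : f.natDegree = t)
    (hfc : ∀ i ≤ t, f.coeff i = c i)
    {l : ℕ} (hrun : ∀ j : ℕ, j < l → a (n + j) = 0) (m : ℕ) :
    (∑ j ∈ range (t - l), C (c (j + l + 1)) *
        ∑ i ∈ range (j + 1), C (a (n + l + j - i)) * X ^ i).coeff m =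
      L ((f.map (algebraMap F E) /ₘ (X - C α)).coeff m) := by
  rw [coeff_sum_C_mul_sum_of_run c a n t l hrun m, coeff_divByMonic_X_sub_C, natDegree_map,
    hdeg, map_sum]
  refine sum_congr rfl fun i hi ↦ ?_
  rw [coeff_map, hfc i (mem_Icc.mp hi).2, mul_comm (α ^ _), ← Algebra.smul_def, map_smul, hL,
    smul_eq_mul, mul_comm]

lemma coeff_taylor_eq_neg_sum_of_divByMonic [CommRing F] [CommRing E]
    [Algebra F E] {α : E} (L : E →ₗ[F] F) {f : F[X]} (hf : aeval α f = 0) {β : F} {e : E}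
    (he : e * (α - algebraMap F E β) = 1) {q : F[X]}
    (hq : ∀ m, q.coeff m = L ((f.map (algebraMap F E) /ₘ (X - C α)).coeff m)) (m : ℕ) :
    (taylor β q).coeff m =
      -∑ i ∈ range (m + 1), (taylor β f).coeff i * L (e ^ (m - i + 1)) := by
  set H := f.map (algebraMap F E) /ₘ (X - C α)
  have hH : (X - C α) * H = f.map (algebraMap F E) :=
    mul_divByMonic_eq_iff_isRoot.mpr (by rwa [IsRoot.def, eval_map_algebraMap])
  have hshift : (X - C (α - algebraMap F E β)) * taylor (algebraMap F E β) H =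
      (taylor β f).map (algebraMap F E) := by
    rw [map_taylor, ← hH, taylor_mul]
    simp only [map_sub, taylor_X, taylor_C]
    ring
  rw [coeff_taylor_of_coeff_eq_linearMap L hq, coeff_eq_neg_sum_of_X_sub_C_mul_eq he hshift,
    map_neg, map_sum]
  congr 1
  refine sum_congr rfl fun i _ ↦ ?_
  rw [coeff_map, ← Algebra.smul_def, map_smul, smul_eq_mul]

end TraceForm

theorem run_count_eq_rootMultiplicity_general
    (F E : Type*) [Field F] [Field E] [Fintype E] [Algebra F E]
    (t : ℕ) (ht : 3 ≤ t)
    (α : E)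
    (c : ℕ → F)
    (hmin : minpoly F α = X ^ t + ∑ j ∈ Finset.range t, C (c j) * X ^ j)
    (hct : c t = 1)
    (γ : E)
    (a : ℤ → F) (ha : ∀ i : ℤ, a i = Algebra.trace F E (γ * α ^ i))
    (β : F)
    (k : ℤ) (hk : α ^ k * (α - algebraMap F E β) = 1)
    (l : ℕ)
    (n : ℤ) (hrun : IsRun a (0 : F) n l)
    (z : ℕ)
    (hz1 : ∀ j : ℕ, 1 ≤ j → j ≤ z → a (n + j * k) = 0)
    (hz2 : a (n + (z + 1) * k) ≠ 0)
    (P : Polynomial F)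
    (hP : P = ∑ j ∈ Finset.range (t - l), C (c (j + l + 1)) *
        ∑ i ∈ Finset.range (j + 1), C (a (n + l + j - i)) * X ^ i) :
    z = Polynomial.rootMultiplicity β P := by
  set f := minpoly F α
  have hfc : ∀ i, f.coeff i = if i ≤ t then c i else 0 :=
    hmin ▸ coeff_X_pow_add_sum_C_mul_X_pow hct
  have hdeg : f.natDegree = t :=
    natDegree_eq_of_le_of_coeff_ne_zero
      (natDegree_le_iff_coeff_eq_zero.mpr fun i hi ↦ by simp [hfc, not_le.mpr hi])
      (by simp [hfc, hct])
  have hroot : ∀ x : F, ¬ f.IsRoot x := fun x ↦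
    (minpoly.irreducible (Algebra.IsIntegral.isIntegral α)).not_isRoot_of_natDegree_ne_one
      (by rw [hdeg]; omega)
  have hα : α ≠ 0 := by
    rintro rfl
    simp only [f, minpoly.zero, natDegree_X] at hdeg
    omega
  set L : E →ₗ[F] F := (Algebra.trace F E).comp (LinearMap.mulLeft F (γ * α ^ n))
  have hL : ∀ i : ℤ, L (α ^ i) = a (n + i) := fun i ↦ by simp [L, ha, zpow_add₀ hα]
  have hPf : ∀ m, P.coeff m = L ((f.map (algebraMap F E) /ₘ (X - C α)).coeff m) := fun m ↦
    hP ▸ coeff_sum_run_eq_coeff_divByMonic L (fun i ↦ zpow_natCast α i ▸ hL i) hdeg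
      (fun i hi ↦ by rw [hfc, if_pos hi]) hrun.1 m
  have hPtaylor : ∀ m, (taylor β P).coeff m =
      -∑ i ∈ range (m + 1), (taylor β f).coeff i * a (n + (m - i + 1 : ℕ) * k) := by
    intro m
    simp only [coeff_taylor_eq_neg_sum_of_divByMonic L (minpoly.aeval F α) hk hPf, f,
      ← zpow_natCast, ← zpow_mul, hL, mul_comm k]
  refine (rootMultiplicity_eq_of_coeff_taylor_eq_neg_sum hPtaylor ?_ hz1
    (by exact_mod_cast hz2)).symm
  rw [taylor_coeff_zero]
  exact hroot β

/-- if `C_n^l` is a run of zeroes of length `l` (with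
`0 ≤ l ≤ t-3`), and `z` is the integer with `a (n + j·kβ) = 0` for
`1 ≤ j ≤ z` and `a (n + (z+1)·kβ) ≠ 0`, then `z` is the multiplicity of
`β` as a root of `P(x) = ∑_{j=0}^{t-l-1} c_{j+l+1} ∑_{i=0}^{j} a_{n+l+j-i} x^i`
(with `c_t = 1`). -/
theorem run_count_eq_rootMultiplicity
    (F E : Type*) [Field F] [Fintype F] [Field E] [Fintype E] [Algebra F E]
    (t : ℕ) (ht : 3 ≤ t) (hrank : Module.finrank F E = t)
    (α : E) (hprim : ∀ x : E, x ≠ 0 → ∃ m : ℕ, α ^ m = x)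
    (c : ℕ → F)
    (hmin : minpoly F α = X ^ t + ∑ j ∈ Finset.range t, C (c j) * X ^ j)
    (hct : c t = 1)
    (γ : E) (hγ : γ ≠ 0)
    (a : ℤ → F) (ha : ∀ i : ℤ, a i = Algebra.trace F E (γ * α ^ i))
    (β : F) (hβ : β ≠ 0)
    (k : ℤ) (hk : α ^ k * (α - algebraMap F E β) = 1)
    (l : ℕ) (hl : l ≤ t - 3)
    (n : ℤ) (hrun : IsRun a (0 : F) n l)
    (z : ℕ)
    (hz1 : ∀ j : ℕ, 1 ≤ j → j ≤ z → a (n + j * k) = 0)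
    (hz2 : a (n + (z + 1) * k) ≠ 0)
    (P : Polynomial F)
    (hP : P = ∑ j ∈ Finset.range (t - l), C (c (j + l + 1)) *
        ∑ i ∈ Finset.range (j + 1), C (a (n + l + j - i)) * X ^ i) :
    z = Polynomial.rootMultiplicity β P :=
  run_count_eq_rootMultiplicity_general F E t ht α c hmin hct γ a ha β k hk l n hrun z hz1 hz2 P hP
end

section
/- Let l ∈ {1, …, t−1} and let k_1 ∈ ℤ satisfy α^{k_1}(α − 1) = 1. Let Z_l be the set of residues n ∈ ℤ/(q^t−1) such that C_n^l is a run of zeroes of length l, and let N_l be the set of residues n ∈ ℤ/(q^t−1) such that C_n^{l'} is a run of some nonzero element of F_q of length l' for some l' > l. Then the map sending n ∈ Z_l to n + j·k_1 (mod q^t−1), where j ≥ 1 is the least positive integer with a_{n+j·k_1} ≠ 0, is a well-defined bijection from Z_l onto N_l; in particular, for each n ∈ Z_l the difference between the start of the corresponding nonzero run and n is a multiple of k_1. -/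
theorem Function.Periodic.apply_add_eq_of_intCast_eq {α : Type*} {f : ℤ → α} {N : ℕ}
    (hf : Function.Periodic f N) {m n : ℤ} (h : (m : ZMod N) = n) (i : ℤ) :
    f (m + i) = f (n + i) := by
  obtain ⟨c, hc⟩ := (ZMod.intCast_eq_intCast_iff_dvd_sub m n N).1 h
  rw [show n + i = m + i + c * N by linarith]
  simpa using (hf.int_mul c (m + i)).symm

theorem forall_le_apply_eq_apply_zero_iff {β : Type*} {f : ℕ → β} {L : ℕ} :
    (∀ j ≤ L, f j = f 0) ↔ ∀ j < L, f (j + 1) = f j := by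
  induction L with
  | zero => simp +contextual
  | succ L ih =>
    refine ⟨fun h j hj => ?_, fun h j hj => ?_⟩
    · rw [h (j + 1) (by omega), h j (by omega)]
    · rcases Nat.lt_or_eq_of_le hj with hj | rfl
      · exact ih.2 (fun i hi => h i (by omega)) j (by omega)
      · rw [h L (by omega), ih.2 (fun i hi => h i (by omega)) L le_rfl]

section Runs

variable {G : Type*} {a : ℤ → G} {δ : G} {n : ℤ} {L : ℕ}

theorem IsRun.apply_eq (h : IsRun a δ n L) (hL : 0 < L) : a n = δ := by
  simpa using h.1 0 hL

theorem isRun_succ_iff : IsRun a δ n (L + 1) ↔ a n = δ ∧ IsRun a (a n) n (L + 1) :=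
  ⟨fun h => ⟨h.apply_eq L.succ_pos, h.apply_eq L.succ_pos ▸ h⟩, fun ⟨hn, h⟩ => hn ▸ h⟩

theorem IsRun.length_eq {δ' : G} {L' : ℕ} (h : IsRun a δ n L) (h' : IsRun a δ' n L')
    (hL : 0 < L) (hL' : 0 < L') : L = L' := by
  obtain rfl : δ = δ' := (h.apply_eq hL).symm.trans (h'.apply_eq hL')
  by_contra hne
  rcases Nat.lt_or_gt_of_ne hne with hlt | hlt
  · exact h.2.2 (h'.1 L hlt)
  · exact h'.2.2 (h.1 L' hlt)

theorem isRun_congr {n' : ℤ} (h : ∀ i, a (n + i) = a (n' + i)) :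
    IsRun a δ n L ↔ IsRun a δ n' L := by
  simp only [IsRun, sub_eq_add_neg, h]

end Runs

section Shift

variable {G : Type*} [AddGroup G] {a : ℤ → G} {k : ℤ}

theorem isRun_zero_iff_isRun_add (hdiff : ∀ i, a (i + k + 1) - a (i + k) = a i) (n : ℤ)
    (L : ℕ) : IsRun a 0 n L ↔ IsRun a (a (n + k)) (n + k) (L + 1) := by
  have hz : ∀ i : ℤ, a (n + i) = 0 ↔ a (n + k + (i + 1)) = a (n + k + i) := fun i => by
    rw [← hdiff, sub_eq_zero, add_right_comm n i k, add_assoc (n + k)]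
  have hconst : (∀ j : ℕ, j < L → a (n + j) = 0) ↔
      ∀ j : ℕ, j < L + 1 → a (n + k + j) = a (n + k) := by
    have := forall_le_apply_eq_apply_zero_iff (f := fun j : ℕ => a (n + k + j)) (L := L)
    simp only [Nat.cast_zero, add_zero, Nat.cast_add, Nat.cast_one, Nat.lt_succ_iff] at this ⊢
    rw [this]
    simp only [hz]
  have hprev : a (n - 1) ≠ 0 ↔ a (n + k - 1) ≠ a (n + k) := by
    simpa [sub_eq_add_neg, eq_comm] using (hz (-1)).not
  have hlast (h0 : ∀ j : ℕ, j < L + 1 → a (n + k + j) = a (n + k)) :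
      a (n + L) ≠ 0 ↔ a (n + k + (L + 1 : ℕ)) ≠ a (n + k) := by
    rw [ne_eq, hz L, ← h0 L L.lt_succ_self, Nat.cast_succ]
  exact ⟨fun ⟨h0, hp, hl⟩ => ⟨hconst.1 h0, hprev.1 hp, (hlast (hconst.1 h0)).1 hl⟩,
    fun ⟨h0, hp, hl⟩ => ⟨hconst.2 h0, hprev.2 hp, (hlast h0).2 hl⟩⟩

theorem isRun_zero_add_mul_iff (hdiff : ∀ i, a (i + k + 1) - a (i + k) = a i) (n : ℤ)
    (l j : ℕ) : IsRun a 0 (n + j * k) (l + j) ↔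
      IsRun a 0 n l ∧ ∀ j' : ℕ, 1 ≤ j' → j' ≤ j → a (n + j' * k) = 0 := by
  induction j with
  | zero => simp +contextual [show ∀ j' : ℕ, 1 ≤ j' → ¬ j' ≤ 0 by omega]
  | succ j ih =>
    rw [show n + (j + 1 : ℕ) * k = n + j * k + k by push_cast; ring, ← add_assoc,
      isRun_succ_iff, ← isRun_zero_iff_isRun_add hdiff, ih]
    rw [show n + j * k + k = n + (j + 1 : ℕ) * k by push_cast; ring]
    constructor
    · rintro ⟨hnext, hrun, hzero⟩
      refine ⟨hrun, fun j' h1 h2 => ?_⟩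
      rcases Nat.lt_or_eq_of_le h2 with h2 | rfl
      exacts [hzero j' h1 (by omega), hnext]
    · rintro ⟨hrun, hzero⟩
      exact ⟨hzero _ (by omega) le_rfl, hrun, fun j' h1 h2 => hzero j' h1 (by omega)⟩

theorem isRun_apply_add_mul_iff (hdiff : ∀ i, a (i + k + 1) - a (i + k) = a i) (n : ℤ)
    (l : ℕ) {j : ℕ} (hj : 1 ≤ j) : IsRun a (a (n + j * k)) (n + j * k) (l + j) ↔
      IsRun a 0 n l ∧ ∀ j' : ℕ, 1 ≤ j' → j' < j → a (n + j' * k) = 0 := by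
  obtain ⟨i, rfl⟩ := Nat.exists_eq_add_of_le' hj
  rw [show n + (i + 1 : ℕ) * k = n + i * k + k by push_cast; ring, ← add_assoc,
    ← isRun_zero_iff_isRun_add hdiff, isRun_zero_add_mul_iff hdiff]
  simp only [Nat.lt_succ_iff]

theorem IsRun.exists_apply_add_mul_ne_zero (hdiff : ∀ i, a (i + k + 1) - a (i + k) = a i)
    {t : ℕ} (hbound : ∀ n : ℤ, ∃ j : ℕ, j < t ∧ a (n + j) ≠ 0) {n : ℤ} {l : ℕ}
    (h : IsRun a 0 n l) : ∃ j : ℕ, 1 ≤ j ∧ a (n + j * k) ≠ 0 := by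
  by_contra! hzero
  have hrun := (isRun_zero_add_mul_iff hdiff n l t).2 ⟨h, fun j' hj' _ => hzero j' hj'⟩
  obtain ⟨i, hi, hne⟩ := hbound (n + t * k)
  exact hne (hrun.1 i (by omega))

end Shift

section FirstNonzeroStep

variable {G : Type*} [Zero G] {a : ℤ → G} {k n : ℤ} {j : ℕ}

def IsFirstNonzeroStep (a : ℤ → G) (k n : ℤ) (j : ℕ) : Prop :=
  1 ≤ j ∧ (∀ j' : ℕ, 1 ≤ j' → j' < j → a (n + j' * k) = 0) ∧ a (n + j * k) ≠ 0

open Classical in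
noncomputable def firstNonzeroStep (a : ℤ → G) (k n : ℤ) : ℕ :=
  if h : ∃ j : ℕ, 1 ≤ j ∧ a (n + j * k) ≠ 0 then Nat.find h else 0

theorem isFirstNonzeroStep_firstNonzeroStep (h : ∃ j : ℕ, 1 ≤ j ∧ a (n + j * k) ≠ 0) :
    IsFirstNonzeroStep a k n (firstNonzeroStep a k n) := by
  classical
  rw [firstNonzeroStep, dif_pos h]
  obtain ⟨hpos, hne⟩ := Nat.find_spec h
  refine ⟨hpos, fun j' h1 h2 => ?_, hne⟩
  by_contra hj'
  exact Nat.find_min h h2 ⟨h1, hj'⟩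

theorem IsFirstNonzeroStep.firstNonzeroStep_eq (h : IsFirstNonzeroStep a k n j) :
    firstNonzeroStep a k n = j := by
  obtain ⟨h1, hzero, hne⟩ := isFirstNonzeroStep_firstNonzeroStep ⟨j, h.1, h.2.2⟩
  by_contra hlt
  rcases Nat.lt_or_gt_of_ne hlt with hlt | hlt
  · exact hne (h.2.1 _ h1 hlt)
  · exact h.2.2 (hzero j h.1 hlt)

theorem firstNonzeroStep_congr {n' : ℤ} (h : ∀ i, a (n + i) = a (n' + i)) :
    firstNonzeroStep a k n = firstNonzeroStep a k n' := by
  by_cases hex : ∃ j : ℕ, 1 ≤ j ∧ a (n + j * k) ≠ 0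
  · have hstep := isFirstNonzeroStep_firstNonzeroStep hex
    simp only [IsFirstNonzeroStep, h] at hstep
    exact (IsFirstNonzeroStep.firstNonzeroStep_eq hstep).symm
  · rw [firstNonzeroStep, dif_neg hex, firstNonzeroStep, dif_neg (by simpa only [h] using hex)]

end FirstNonzeroStep

section Bijection

variable {G : Type*} [AddGroup G] {a : ℤ → G} {k : ℤ} {N : ℕ}

def zeroRunStarts (N : ℕ) (a : ℤ → G) (l : ℕ) : Set (ZMod N) :=
  {x | ∃ n : ℤ, (n : ZMod N) = x ∧ IsRun a 0 n l}

def longNonzeroRunStarts (N : ℕ) (a : ℤ → G) (l : ℕ) : Set (ZMod N) :=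
  {x | ∃ n : ℤ, (n : ZMod N) = x ∧ ∃ δ : G, δ ≠ 0 ∧ ∃ l' : ℕ, l < l' ∧ IsRun a δ n l'}

noncomputable def runShift (N : ℕ) (a : ℤ → G) (k : ℤ) (x : ZMod N) : ZMod N :=
  ((x.cast + firstNonzeroStep a k x.cast * k : ℤ) : ZMod N)

theorem runShift_intCast (hper : Function.Periodic a N) (n : ℤ) :
    runShift N a k n = ((n + firstNonzeroStep a k n * k : ℤ) : ZMod N) := by
  have hcast : (((n : ZMod N).cast : ℤ) : ZMod N) = n := ZMod.intCast_zmod_cast _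
  rw [runShift, firstNonzeroStep_congr (hper.apply_add_eq_of_intCast_eq hcast)]
  push_cast [hcast]
  rfl

theorem IsRun.isFirstNonzeroStep (hdiff : ∀ i, a (i + k + 1) - a (i + k) = a i) {t : ℕ}
    (hbound : ∀ n : ℤ, ∃ j : ℕ, j < t ∧ a (n + j) ≠ 0) {n : ℤ} {l : ℕ} (h : IsRun a 0 n l) :
    IsFirstNonzeroStep a k n (firstNonzeroStep a k n) :=
  isFirstNonzeroStep_firstNonzeroStep (h.exists_apply_add_mul_ne_zero hdiff hbound)

theorem bijOn_runShift (hdiff : ∀ i, a (i + k + 1) - a (i + k) = a i)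
    (hper : Function.Periodic a N) {t : ℕ} (hbound : ∀ n : ℤ, ∃ j : ℕ, j < t ∧ a (n + j) ≠ 0)
    (l : ℕ) :
    Set.BijOn (runShift N a k) (zeroRunStarts N a l) (longNonzeroRunStarts N a l) := by
  refine ⟨?_, ?_, ?_⟩
  · rintro _ ⟨n, rfl, hn⟩
    obtain ⟨hpos, hzero, hne⟩ := hn.isFirstNonzeroStep hdiff hbound (k := k)
    exact ⟨_, (runShift_intCast hper n).symm, _, hne, _, by omega,
      (isRun_apply_add_mul_iff hdiff n l hpos).2 ⟨hn, hzero⟩⟩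
  · rintro _ ⟨n₁, rfl, h₁⟩ _ ⟨n₂, rfl, h₂⟩ heq
    obtain ⟨hpos₁, hzero₁, -⟩ := h₁.isFirstNonzeroStep hdiff hbound (k := k)
    obtain ⟨hpos₂, hzero₂, -⟩ := h₂.isFirstNonzeroStep hdiff hbound (k := k)
    rw [runShift_intCast hper, runShift_intCast hper] at heq
    have hrun₁ := (isRun_apply_add_mul_iff hdiff n₁ l hpos₁).2 ⟨h₁, hzero₁⟩
    have hrun₂ := (isRun_apply_add_mul_iff hdiff n₂ l hpos₂).2 ⟨h₂, hzero₂⟩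
    rw [← isRun_congr (hper.apply_add_eq_of_intCast_eq heq)] at hrun₂
    have hlen := hrun₁.length_eq hrun₂ (by omega) (by omega)
    rw [show firstNonzeroStep a k n₁ = firstNonzeroStep a k n₂ by omega] at heq
    push_cast at heq
    exact add_right_cancel heq
  · rintro _ ⟨m, rfl, δ, hδ, l', hll', hm⟩
    obtain ⟨j, rfl⟩ := Nat.exists_eq_add_of_lt hll'
    set n := m - (j + 1 : ℕ) * k
    have hnm : n + (j + 1 : ℕ) * k = m := by ring
    have hδm : a m = δ := hm.apply_eq (by omega)
    obtain ⟨hn, hzero⟩ := (isRun_apply_add_mul_iff hdiff n l (Nat.le_add_left 1 j)).1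
      (by rwa [hnm, hδm, ← add_assoc])
    have hstep : IsFirstNonzeroStep a k n (j + 1) := ⟨by omega, hzero, by rwa [hnm, hδm]⟩
    refine ⟨n, ⟨n, rfl, hn⟩, ?_⟩
    rw [runShift_intCast hper, hstep.firstNonzeroStep_eq, hnm]

end Bijection

theorem zpow_add_add_one_sub_zpow_add {K : Type*} [Field K] {α : K} (hα : α ≠ 0) {k : ℤ}
    (hk : α ^ k * (α - 1) = 1) (i : ℤ) : α ^ (i + k + 1) - α ^ (i + k) = α ^ i := by
  rw [zpow_add_one₀ hα, zpow_add₀ hα]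
  linear_combination α ^ i * hk

theorem FiniteField.periodic_zpow {K : Type*} [GroupWithZero K] [Fintype K] {α : K}
    (hα : α ≠ 0) :
    Function.Periodic (fun i : ℤ => α ^ i) (Fintype.card K - 1 : ℕ) := fun i => by
  dsimp only
  rw [zpow_add₀ hα, zpow_natCast, FiniteField.pow_card_sub_one_eq_one α hα, mul_one]

theorem exists_lt_finrank_trace_mul_pow_ne_zero {F E : Type*} [Field F] [Fintype F] [Field E]
    [Fintype E] [Algebra F E] {α : E} (hdeg : (minpoly F α).natDegree = Module.finrank F E)
    {β : E} (hβ : β ≠ 0) : ∃ j < Module.finrank F E, Algebra.trace F E (β * α ^ j) ≠ 0 := by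
  by_contra! hzero
  let B := basisOfLinearIndependentOfCardEqFinrank' _ (linearIndependent_pow (K := F) α)
    (by rw [Fintype.card_fin, hdeg])
  have htrace : Algebra.traceForm F E β = 0 :=
    B.ext fun i => by simpa [B] using hzero i (hdeg ▸ i.2)
  exact hβ ((traceForm_nondegenerate F E).1 β fun y => by simp [htrace])

theorem run_bijection_general
    (F E : Type*) [Field F] [Fintype F] [Field E] [Fintype E] [Algebra F E]
    (t : ℕ) (ht : 2 ≤ t) (hrank : Module.finrank F E = t)
    (α : E)
    (hdeg : (minpoly F α).natDegree = t)
    (γ : E) (hγ : γ ≠ 0)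
    (a : ℤ → F) (ha : ∀ i : ℤ, a i = Algebra.trace F E (γ * α ^ i))
    (k : ℤ) (hk : α ^ k * (α - 1) = 1)
    (l : ℕ) :
    ∃ g : ZMod (Fintype.card F ^ t - 1) → ZMod (Fintype.card F ^ t - 1),
      Set.BijOn g
        {x | ∃ n : ℤ, (n : ZMod (Fintype.card F ^ t - 1)) = x ∧ IsRun a (0 : F) n l}
        {x | ∃ n : ℤ, (n : ZMod (Fintype.card F ^ t - 1)) = x ∧
            ∃ δ : F, δ ≠ 0 ∧ ∃ l' : ℕ, l < l' ∧ IsRun a δ n l'} ∧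
      ∀ n : ℤ, IsRun a (0 : F) n l →
        ∃ j : ℕ, 1 ≤ j ∧
          (∀ j' : ℕ, 1 ≤ j' → j' < j → a (n + j' * k) = 0) ∧
          a (n + j * k) ≠ 0 ∧
          g (n : ZMod (Fintype.card F ^ t - 1))
            = ((n + j * k : ℤ) : ZMod (Fintype.card F ^ t - 1)) := by
  have hα : α ≠ 0 := by
    rintro rfl
    rw [minpoly.zero, Polynomial.natDegree_X] at hdeg
    omega
  have hdiff (i : ℤ) : a (i + k + 1) - a (i + k) = a i := by
    rw [ha, ha, ha, ← map_sub, ← mul_sub, zpow_add_add_one_sub_zpow_add hα hk]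
  have hper : Function.Periodic a (Fintype.card F ^ t - 1 : ℕ) := by
    rw [← hrank, ← Module.card_eq_pow_finrank, funext ha]
    exact (FiniteField.periodic_zpow hα).comp fun x => Algebra.trace F E (γ * x)
  have hbound (n : ℤ) : ∃ j : ℕ, j < t ∧ a (n + j) ≠ 0 := by
    obtain ⟨j, hj, hne⟩ := exists_lt_finrank_trace_mul_pow_ne_zero (hdeg.trans hrank.symm)
      (mul_ne_zero hγ (zpow_ne_zero n hα))
    refine ⟨j, hrank ▸ hj, ?_⟩
    rwa [ha, zpow_add₀ hα, zpow_natCast, ← mul_assoc]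
  refine ⟨runShift _ a k, bijOn_runShift hdiff hper hbound l, fun n hn => ?_⟩
  obtain ⟨hpos, hzero, hne⟩ := hn.isFirstNonzeroStep hdiff hbound (k := k)
  exact ⟨_, hpos, hzero, hne, runShift_intCast hper n⟩

/-- for `1 ≤ l ≤ t-1`, the map sending the starting residue `n`
(mod `q^t - 1`) of a run of zeroes of length `l` to `n + j·k₁`, where `j ≥ 1`
is least with `a (n + j·k₁) ≠ 0`, is a well-defined bijection from the set
`Z_l` of starting residues of runs of zeroes of length `l` onto the set `N_l`
of starting residues of runs of nonzero elements of length `> l`; in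
particular the difference between the start of the corresponding nonzero run
and `n` is a multiple of `k₁`. -/
theorem run_bijection
    (F E : Type*) [Field F] [Fintype F] [Field E] [Fintype E] [Algebra F E]
    (t : ℕ) (ht : 2 ≤ t) (hrank : Module.finrank F E = t)
    (α : E) (hprim : ∀ x : E, x ≠ 0 → ∃ m : ℕ, α ^ m = x)
    (hdeg : (minpoly F α).natDegree = t)
    (γ : E) (hγ : γ ≠ 0)
    (a : ℤ → F) (ha : ∀ i : ℤ, a i = Algebra.trace F E (γ * α ^ i))
    (k : ℤ) (hk : α ^ k * (α - 1) = 1)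
    (l : ℕ) (hl1 : 1 ≤ l) (hl2 : l ≤ t - 1) :
    ∃ g : ZMod (Fintype.card F ^ t - 1) → ZMod (Fintype.card F ^ t - 1),
      Set.BijOn g
        {x | ∃ n : ℤ, (n : ZMod (Fintype.card F ^ t - 1)) = x ∧ IsRun a (0 : F) n l}
        {x | ∃ n : ℤ, (n : ZMod (Fintype.card F ^ t - 1)) = x ∧
            ∃ δ : F, δ ≠ 0 ∧ ∃ l' : ℕ, l < l' ∧ IsRun a δ n l'} ∧
      ∀ n : ℤ, IsRun a (0 : F) n l →
        ∃ j : ℕ, 1 ≤ j ∧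
          (∀ j' : ℕ, 1 ≤ j' → j' < j → a (n + j' * k) = 0) ∧
          a (n + j * k) ≠ 0 ∧
          g (n : ZMod (Fintype.card F ^ t - 1))
            = ((n + j * k : ℤ) : ZMod (Fintype.card F ^ t - 1)) :=
  run_bijection_general F E t ht hrank α hdeg γ hγ a ha k hk l
end

section
/- Enumerate the nonzero elements of F_q as β_1, …, β_{q−1}, and for each β_i let k_{β_i} ∈ ℤ satisfy α^{k_{β_i}}(α − β_i) = 1. Define the column map φ on {1,…,q+1} × {1,…,t} by φ(1,j) = t−j, φ(2,j) = t+j−1, and φ(i+2, j) = t + j·k_{β_i} for 1 ≤ i ≤ q−1 and 1 ≤ j ≤ t. Then for every left-justified subset L of {1,…,q+1} × {1,…,t} of size t and every function v : L → F_q, there is exactly one element γ ∈ F_{q^t} such that Tr(γ α^{φ(c)}) = v(c) for all c ∈ L. (Hence the q^t × (q+1)t array whose rows are indexed by γ ∈ F_{q^t} and whose entry in row γ and column c is Tr(γ α^{φ(c)}) is an ordered orthogonal array OOA(t, q+1, t, q).) -/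
/-- A subset `L` of `{1,…,m} × {1,…,s}` is left-justified if `(i,j) ∈ L` with
`j > 1` implies `(i, j-1) ∈ L`. -/
def LeftJustified (L : Finset (ℕ × ℕ)) : Prop :=
  ∀ p ∈ L, 2 ≤ p.2 → (p.1, p.2 - 1) ∈ L

/-!
The columns `α ^ φ c`, `c ∈ L`, form an `F`-basis of `E`; as the trace form of `E/F` is
nondegenerate, `γ ↦ (Tr (γ α ^ φ c))_c` is then a bijection `E → F ^ L`.

Each row of `L` is an initial segment of length `s r`, and `Σ s r = t`. Divided by `α ^ t`,
row `1` contributes `(α - 0)⁻¹ ^ j`, row `i + 2` contributes `α ^ (j k_{βᵢ}) = (α - βᵢ)⁻¹ ^ j`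
and row `2` contributes `α ^ (j - 1)`. A linear relation among these elements is therefore a
partial fraction expansion with the distinct poles `0, β₁, …, β_{q-1}` and polynomial part of
degree `< s 2`. Clearing denominators yields a polynomial of degree `< t` vanishing at `α`, which
is zero because `α` has degree `t`, and uniqueness of partial fractions kills every coefficient.
-/

open Finset Polynomial

theorem LinearMap.BilinForm.existsUnique_apply_basis_eq {K V ι : Type*} [Field K]
    [AddCommGroup V] [Module K V] [Finite ι] {B : LinearMap.BilinForm K V}
    (hB : B.Nondegenerate) (b : Module.Basis ι K V) (v : ι → K) :
    ∃! x, ∀ i, B x (b i) = v i := by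
  have := Fintype.ofFinite ι
  classical
  have hx : ∀ i, B (∑ j, v j • B.dualBasis hB b j) (b i) = v i := by
    simp [apply_dualBasis_left]
  exact ⟨_, hx, fun y hy => LinearMap.ker_eq_bot.mp hB.ker_eq_bot
    (b.ext fun i => (hy i).trans (hx i).symm)⟩

theorem existsUnique_trace_mul_eq {K L ι : Type*} [Field K] [Field L] [Algebra K L]
    [FiniteDimensional K L] [Algebra.IsSeparable K L] {s : Finset ι} {y : ι → L}
    (hy : LinearIndepOn K y s) (hcard : #s = Module.finrank K L) (v : ι → K) :
    ∃! γ : L, ∀ i ∈ s, Algebra.trace K L (γ * y i) = v i := by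
  have : Nonempty s := (card_pos.mp (hcard ▸ Module.finrank_pos)).to_subtype
  obtain ⟨γ, hγ, huniq⟩ := LinearMap.BilinForm.existsUnique_apply_basis_eq
    (traceForm_nondegenerate K L)
    (basisOfLinearIndependentOfCardEqFinrank hy (by simpa using hcard)) (fun i => v i)
  refine ⟨γ, fun i hi => by simpa using hγ ⟨i, hi⟩, fun γ' hγ' => huniq γ' fun i => ?_⟩
  simpa using hγ' i i.2

theorem mem_degreeLT_of_natDegree_lt {R : Type*} [Semiring R] {p : R[X]} {n : ℕ}
    (h : p.natDegree < n) : p ∈ degreeLT R n :=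
  mem_degreeLT.mpr (degree_le_natDegree.trans_lt (by exact_mod_cast h))

section PartialFractions

variable {F E : Type*} [Field F] [CommRing E] [Algebra F E]

theorem eq_zero_of_aeval_eq_zero_of_mem_degreeLT {α : E} {p : F[X]}
    (hp : p ∈ degreeLT F (minpoly F α).natDegree) (h : aeval α p = 0) : p = 0 := by
  by_contra hp0
  exact ((natDegree_lt_iff_degree_lt hp0).mpr (mem_degreeLT.mp hp)).not_ge
    (natDegree_le_of_dvd (minpoly.dvd F α h) hp0)

theorem eq_zero_of_sum_smul_pow_add_sum_smul_pow_eq_zero {ι : Type*} {S : Finset ι}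
    {a : ι → F} (ha : Set.InjOn a S) {α : E} {x : ι → E}
    (hx : ∀ i ∈ S, x i * (α - algebraMap F E (a i)) = 1) {n : ι → ℕ} {m : ℕ}
    (hdeg : ∑ i ∈ S, n i + m ≤ (minpoly F α).natDegree) {w : ι → ℕ → F} {u : ℕ → F}
    (h : ∑ i ∈ S, ∑ j ∈ range (n i), w i j • x i ^ (j + 1) + ∑ j ∈ range m, u j • α ^ j = 0) :
    (∀ i ∈ S, ∀ j < n i, w i j = 0) ∧ ∀ j < m, u j = 0 := by
  classical
  set g : ι → F[X] := fun i => X - C (a i)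
  -- `r i j` multiplies `g i ^ j`, i.e. it is the coefficient of `x i ^ (n i - j)`.
  set r : (i : ι) → Fin (n i) → F[X] := fun i j => C (w i (n i - 1 - j))
  set q : F[X] := ∑ j ∈ range m, C (u j) * X ^ j
  set P : F[X] := q * ∏ i ∈ S, g i ^ n i +
    ∑ i ∈ S, ∑ j, r i j * g i ^ (j : ℕ) * ∏ k ∈ S.erase i, g k ^ n k
  have hprod : ∀ T : Finset ι, (∏ k ∈ T, g k ^ n k).natDegree = ∑ k ∈ T, n k := fun T => by
    rw [natDegree_prod_of_monic _ _ fun k _ => (monic_X_sub_C _).pow _]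
    simp [g]
  have hPdeg : P ∈ degreeLT F (∑ i ∈ S, n i + m) := by
    refine add_mem ?_ (sum_mem fun i hi => sum_mem fun j _ => ?_)
    · rw [sum_mul]
      refine sum_mem fun j hj => mem_degreeLT_of_natDegree_lt ?_
      refine (natDegree_mul_le.trans
        (add_le_add (natDegree_C_mul_X_pow_le _ _) (hprod S).le)).trans_lt ?_
      have := mem_range.mp hj
      omega
    · refine mem_degreeLT_of_natDegree_lt ?_
      have hgj : (r i j * g i ^ (j : ℕ)).natDegree ≤ j := by
        have := natDegree_C_mul_le (w i (n i - 1 - j)) ((X - C (a i)) ^ (j : ℕ))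
        rwa [(monic_X_sub_C _).natDegree_pow, natDegree_X_sub_C, mul_one] at this
      have := add_sum_erase S n hi
      refine (natDegree_mul_le.trans (add_le_add hgj (hprod _).le)).trans_lt ?_
      omega
  have hcancel : ∀ i ∈ S, ∀ j < n i,
      (α - algebraMap F E (a i)) ^ (n i - 1 - j) *
          ∏ k ∈ S.erase i, (α - algebraMap F E (a k)) ^ n k =
        (∏ k ∈ S, (α - algebraMap F E (a k)) ^ n k) * x i ^ (j + 1) := fun i hi j hj => by
    obtain ⟨d, hd⟩ : ∃ d, n i = d + (j + 1) := ⟨n i - 1 - j, by omega⟩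
    have hxy : (x i * (α - algebraMap F E (a i))) ^ (j + 1) = 1 := by rw [hx i hi, one_pow]
    rw [← mul_prod_erase S _ hi, show n i - 1 - j = d by omega, hd]
    generalize α - algebraMap F E (a i) = y at hxy ⊢
    linear_combination (-(y ^ d * ∏ k ∈ S.erase i, (α - algebraMap F E (a k)) ^ n k)) * hxy
  have hPα : aeval α P = (∏ i ∈ S, (α - algebraMap F E (a i)) ^ n i) *
      (∑ i ∈ S, ∑ j ∈ range (n i), w i j • x i ^ (j + 1) + ∑ j ∈ range m, u j • α ^ j) := by
    simp only [P, q, r, g, map_add, map_mul, map_sum, map_prod, map_pow, map_sub, aeval_C,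
      aeval_X]
    rw [mul_add, add_comm, mul_comm]
    congr 1
    · rw [mul_sum]
      refine sum_congr rfl fun i hi => ?_
      rw [Fin.sum_univ_eq_sum_range (fun j => algebraMap F E (w i (n i - 1 - j)) *
        (α - algebraMap F E (a i)) ^ j * ∏ k ∈ S.erase i, (α - algebraMap F E (a k)) ^ n k),
        ← sum_range_reflect, mul_sum]
      refine sum_congr rfl fun j hj => ?_
      have hj := mem_range.mp hj
      rw [show n i - 1 - (n i - 1 - j) = j by omega, mul_assoc, hcancel i hi j hj,
        Algebra.smul_def]
      ring
    · exact congrArg _ (sum_congr rfl fun j _ => by rw [Algebra.smul_def])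
  have hP : P = 0 := eq_zero_of_aeval_eq_zero_of_mem_degreeLT (degreeLT_mono hdeg hPdeg)
    (by rw [hPα, h, mul_zero])
  obtain ⟨hq, hr⟩ := quo_mul_prod_pow_add_sum_rem_mul_prod_pow_unique (g := g) (q₂ := 0)
    (r₁ := r) (r₂ := 0) (fun i _ => monic_X_sub_C _)
    (fun i hi j hj hij => isCoprime_X_sub_C_of_isUnit_sub
      (sub_ne_zero.mpr fun h => hij (ha hi hj h)).isUnit)
    (fun i _ j => by simpa [r, g] using degree_C_lt) (fun i _ j => by simp [g])
    (by simp only [zero_mul, zero_add, Pi.zero_apply, sum_const_zero]; exact hP)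
  constructor
  · intro i hi j hj
    simpa [r, show n i - 1 - (n i - 1 - j) = j by omega] using
      congrFun (hr i hi) ⟨n i - 1 - j, by omega⟩
  · intro j hj
    simpa [q, finsetSum_coeff, coeff_C_mul_X_pow, hj] using congrArg (coeff · j) hq

end PartialFractions

def rowLength (L : Finset (ℕ × ℕ)) (r : ℕ) : ℕ := #(L.filter (·.1 = r))

namespace LeftJustified

variable {L : Finset (ℕ × ℕ)}

theorem mem_of_le (hL : LeftJustified L) {r j j' : ℕ} (hj' : 1 ≤ j') (hle : j' ≤ j)
    (h : (r, j) ∈ L) : (r, j') ∈ L := by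
  induction j, hle using Nat.le_induction with
  | base => exact h
  | succ n hn ih => exact ih (hL _ h (by omega))

theorem filter_fst_eq (hL : LeftJustified L) (hpos : ∀ c ∈ L, 1 ≤ c.2) (r : ℕ) :
    L.filter (·.1 = r) = (range (rowLength L r)).image fun j => (r, j + 1) := by
  refine eq_of_subset_of_card_le (fun c hc => ?_) (card_image_le.trans (card_range _).le)
  obtain ⟨hcL, rfl⟩ := mem_filter.mp hc
  have hrow : Icc 1 c.2 ⊆ (L.filter (·.1 = c.1)).image Prod.snd := fun j hj => by
    obtain ⟨hj1, hj2⟩ := mem_Icc.mp hj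
    exact mem_image.mpr ⟨(c.1, j), mem_filter.mpr ⟨hL.mem_of_le hj1 hj2 hcL, rfl⟩, rfl⟩
  have hlen : c.2 ≤ rowLength L c.1 := by
    simpa [rowLength] using (card_le_card hrow).trans card_image_le
  have := hpos c hcL
  exact mem_image.mpr ⟨c.2 - 1, mem_range.mpr (by omega), Prod.ext rfl (Nat.sub_add_cancel this)⟩

theorem mk_add_one_mem_iff (hL : LeftJustified L) (hpos : ∀ c ∈ L, 1 ≤ c.2) {r j : ℕ} :
    (r, j + 1) ∈ L ↔ j < rowLength L r := by
  simpa using congrArg ((r, j + 1) ∈ ·) (hL.filter_fst_eq hpos r)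

theorem sum_eq {M : Type*} [AddCommMonoid M] (hL : LeftJustified L) (hpos : ∀ c ∈ L, 1 ≤ c.2)
    {R : Finset ℕ} (hR : ∀ c ∈ L, c.1 ∈ R) (f : ℕ × ℕ → M) :
    ∑ c ∈ L, f c = ∑ r ∈ R, ∑ j ∈ range (rowLength L r), f (r, j + 1) := by
  rw [← sum_fiberwise_of_maps_to hR]
  refine sum_congr rfl fun r _ => ?_
  rw [hL.filter_fst_eq hpos, sum_image fun i _ j _ h => by simpa using h]

end LeftJustified

theorem linearIndepOn_zpow_of_leftJustified {F E : Type*} [Field F] [Field E] [Algebra F E]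
    {L : Finset (ℕ × ℕ)} (hLJ : LeftJustified L) (hpos : ∀ c ∈ L, 1 ≤ c.2)
    {R : Finset ℕ} {r₀ : ℕ} (hr₀ : r₀ ∉ R) (hrows : ∀ c ∈ L, c.1 ∈ insert r₀ R)
    {α : E} (hα : α ≠ 0) {a : ℕ → F} (ha : Set.InjOn a R) {e : ℕ → ℤ}
    (he : ∀ r ∈ R, α ^ e r * (α - algebraMap F E (a r)) = 1) (N : ℤ) {φ : ℕ × ℕ → ℤ}
    (hφ : ∀ c ∈ L, c.1 ∈ R → φ c = N + c.2 * e c.1)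
    (hφ₀ : ∀ c ∈ L, c.1 = r₀ → φ c = N + c.2 - 1)
    (hcard : #L ≤ (minpoly F α).natDegree) :
    LinearIndepOn F (fun c => α ^ φ c) (L : Set (ℕ × ℕ)) := by
  rw [linearIndepOn_finset_iff]
  intro g hg
  set s := rowLength L
  have hmem : ∀ {r j}, (r, j + 1) ∈ L ↔ j < s r := hLJ.mk_add_one_mem_iff hpos
  have hpow : ∀ r ∈ R, ∀ j < s r, α ^ φ (r, j + 1) = α ^ N * (α ^ e r) ^ (j + 1) :=
    fun r hr j hj => by
      rw [hφ _ (hmem.mpr hj) hr, zpow_add₀ hα, ← zpow_natCast, ← zpow_mul, mul_comm (e r)]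
  have hpow₀ : ∀ j < s r₀, α ^ φ (r₀, j + 1) = α ^ N * α ^ j := fun j hj => by
    rw [hφ₀ _ (hmem.mpr hj) rfl, ← zpow_natCast, ← zpow_add₀ hα]
    congr 1
    push_cast
    ring
  have hsum : ∑ c ∈ L, g c • α ^ φ c = α ^ N *
      (∑ r ∈ R, ∑ j ∈ range (s r), g (r, j + 1) • (α ^ e r) ^ (j + 1) +
        ∑ j ∈ range (s r₀), g (r₀, j + 1) • α ^ j) := by
    rw [hLJ.sum_eq hpos hrows, sum_insert hr₀, add_comm, mul_add, mul_sum, mul_sum]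
    congr 1
    · refine sum_congr rfl fun r hr => ?_
      rw [mul_sum]
      exact sum_congr rfl fun j hj => by rw [hpow r hr j (mem_range.mp hj), mul_smul_comm]
    · exact sum_congr rfl fun j hj => by rw [hpow₀ j (mem_range.mp hj), mul_smul_comm]
  have hdeg : ∑ r ∈ R, s r + s r₀ = #L := by
    rw [card_eq_sum_card_fiberwise hrows, sum_insert hr₀, add_comm]
    rfl
  obtain ⟨hw, hu⟩ := eq_zero_of_sum_smul_pow_add_sum_smul_pow_eq_zero ha he
    (hdeg.trans_le hcard) ((mul_eq_zero.mp (hsum ▸ hg)).resolve_left (zpow_ne_zero N hα))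
  rintro ⟨r, j⟩ hc
  obtain ⟨j, rfl⟩ : ∃ j', j = j' + 1 := ⟨j - 1, by have : 1 ≤ j := hpos _ hc; omega⟩
  rcases mem_insert.mp (hrows _ hc) with rfl | hr
  · exact hu j (hmem.mp hc)
  · exact hw r hr j (hmem.mp hc)

/- Row `1` is handled like the rows `i + 2`, with pole `0` and exponent `-1`:
`α ^ (t - j) = α ^ t * (α ^ (-1)) ^ j` and `α ^ (-1) * (α - 0) = 1`. -/
def rowPole {F : Type*} [Zero F] (β : ℕ → F) (r : ℕ) : F := if r = 1 then 0 else β (r - 2)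

def rowExponent (k : ℕ → ℤ) (r : ℕ) : ℤ := if r = 1 then -1 else k (r - 2)

theorem rowPole_injOn {F : Type*} [Zero F] {β : ℕ → F} {n : ℕ}
    (hβne : ∀ i : ℕ, 1 ≤ i → i ≤ n - 1 → β i ≠ 0)
    (hβinj : ∀ i i' : ℕ, 1 ≤ i → i ≤ n - 1 → 1 ≤ i' → i' ≤ n - 1 → β i = β i' → i = i') :
    Set.InjOn (rowPole β) ((Icc 1 (n + 1)).erase 2 : Finset ℕ) := by
  intro r hr r' hr' h
  simp only [coe_erase, coe_Icc, Set.mem_sdiff, Set.mem_Icc, Set.mem_singleton_iff] at hr hr'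
  unfold rowPole at h
  split_ifs at h with h1 h1'
  · omega
  · exact absurd h.symm (hβne _ (by omega) (by omega))
  · exact absurd h (hβne _ (by omega) (by omega))
  · have := hβinj _ _ (by omega) (by omega) (by omega) (by omega) h
    omega

theorem zpow_rowExponent_mul {F E : Type*} [Field F] [Field E] [Algebra F E] {α : E}
    (hα : α ≠ 0) {β : ℕ → F} {k : ℕ → ℤ} {n : ℕ}
    (hk : ∀ i : ℕ, 1 ≤ i → i ≤ n - 1 → α ^ k i * (α - algebraMap F E (β i)) = 1) :
    ∀ r ∈ (Icc 1 (n + 1)).erase 2,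
      α ^ rowExponent k r * (α - algebraMap F E (rowPole β r)) = 1 := by
  intro r hr
  simp only [mem_erase, mem_Icc] at hr
  unfold rowExponent rowPole
  split_ifs
  · simp [hα]
  · exact hk _ (by omega) (by omega)

theorem eq_add_mul_rowExponent {φ : ℕ × ℕ → ℤ} {k : ℕ → ℤ} {n t : ℕ}
    (hφ1 : ∀ j : ℕ, 1 ≤ j → j ≤ t → φ (1, j) = (t : ℤ) - j)
    (hφ3 : ∀ i j : ℕ, 1 ≤ i → i ≤ n - 1 → 1 ≤ j → j ≤ t →
      φ (i + 2, j) = (t : ℤ) + (j : ℤ) * k i)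
    {c : ℕ × ℕ} (hc : 1 ≤ c.2 ∧ c.2 ≤ t) (hr : c.1 ∈ (Icc 1 (n + 1)).erase 2) :
    φ c = t + c.2 * rowExponent k c.1 := by
  obtain ⟨r, j⟩ := c
  simp only [mem_erase, mem_Icc] at hc hr
  unfold rowExponent
  split_ifs with h1
  · obtain rfl : r = 1 := h1
    rw [hφ1 j hc.1 hc.2]
    ring
  · obtain ⟨i, rfl⟩ : ∃ i, r = i + 2 := ⟨r - 2, by omega⟩
    rw [hφ3 i j (by omega) (by omega) hc.1 hc.2, Nat.add_sub_cancel]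

theorem runs_construction_is_OOA_general
    (F E : Type*) [Field F] [Fintype F] [Field E] [Fintype E] [Algebra F E]
    (t : ℕ) (ht : 3 ≤ t) (hrank : Module.finrank F E = t)
    (α : E)
    (hdeg : (minpoly F α).natDegree = t)
    (β : ℕ → F)
    (hβne : ∀ i : ℕ, 1 ≤ i → i ≤ Fintype.card F - 1 → β i ≠ 0)
    (hβinj : ∀ i i' : ℕ, 1 ≤ i → i ≤ Fintype.card F - 1 → 1 ≤ i' →
        i' ≤ Fintype.card F - 1 → β i = β i' → i = i')
    (k : ℕ → ℤ)
    (hk : ∀ i : ℕ, 1 ≤ i → i ≤ Fintype.card F - 1 →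
        α ^ k i * (α - algebraMap F E (β i)) = 1)
    (φ : ℕ × ℕ → ℤ)
    (hφ1 : ∀ j : ℕ, 1 ≤ j → j ≤ t → φ (1, j) = (t : ℤ) - j)
    (hφ2 : ∀ j : ℕ, 1 ≤ j → j ≤ t → φ (2, j) = (t : ℤ) + j - 1)
    (hφ3 : ∀ i j : ℕ, 1 ≤ i → i ≤ Fintype.card F - 1 → 1 ≤ j → j ≤ t →
        φ (i + 2, j) = (t : ℤ) + (j : ℤ) * k i) :
    ∀ (L : Finset (ℕ × ℕ)),
      L ⊆ Finset.Icc 1 (Fintype.card F + 1) ×ˢ Finset.Icc 1 t →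
      LeftJustified L → L.card = t →
      ∀ v : ℕ × ℕ → F, ∃! γ : E, ∀ c ∈ L,
        Algebra.trace F E (γ * α ^ φ c) = v c := by
  intro L hL hLJ hLcard v
  have hα : α ≠ 0 := by
    rintro rfl
    rw [minpoly.zero, natDegree_X] at hdeg
    omega
  have hbox : ∀ c ∈ L, (1 ≤ c.1 ∧ c.1 ≤ Fintype.card F + 1) ∧ 1 ≤ c.2 ∧ c.2 ≤ t :=
    fun c hc => by simpa using hL hc
  have : FiniteDimensional F E := Module.Finite.of_finite
  refine existsUnique_trace_mul_eq ?_ (hLcard.trans hrank.symm) v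
  refine linearIndepOn_zpow_of_leftJustified hLJ (fun c hc => (hbox c hc).2.1) (r₀ := 2)
    (notMem_erase 2 _) (fun c hc => ?_) hα (rowPole_injOn hβne hβinj)
    (zpow_rowExponent_mul hα hk) t (fun c hc => eq_add_mul_rowExponent hφ1 hφ3 (hbox c hc).2)
    (fun c hc hr => by rw [← hφ2 c.2 (hbox c hc).2.1 (hbox c hc).2.2, ← hr]) (by rw [hLcard, hdeg])
  rw [insert_erase (by simpa using Nat.one_le_iff_ne_zero.mpr Fintype.card_ne_zero)]
  simpa using (hbox c hc).1

/-- with the column map `φ(1,j) = t-j`, `φ(2,j) = t+j-1`, and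
`φ(i+2,j) = t + j·k_{βᵢ}` (where `α^{k_{βᵢ}}(α - βᵢ) = 1` and `β₁,…,β_{q-1}`
enumerate the nonzero elements of `F_q`), for every left-justified subset `L`
of `{1,…,q+1} × {1,…,t}` of size `t` and every assignment `v : L → F_q`, there
is exactly one `γ ∈ F_{q^t}` with `Tr(γ α^{φ(c)}) = v c` for all `c ∈ L`;
hence the array with rows `(Tr(γ α^{φ(c)}))_c`, `γ ∈ F_{q^t}`, is an
`OOA(t, q+1, t, q)`. -/
theorem runs_construction_is_OOA
    (F E : Type*) [Field F] [Fintype F] [Field E] [Fintype E] [Algebra F E]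
    (t : ℕ) (ht : 3 ≤ t) (hrank : Module.finrank F E = t)
    (α : E) (hprim : ∀ x : E, x ≠ 0 → ∃ m : ℕ, α ^ m = x)
    (hdeg : (minpoly F α).natDegree = t)
    (β : ℕ → F)
    (hβne : ∀ i : ℕ, 1 ≤ i → i ≤ Fintype.card F - 1 → β i ≠ 0)
    (hβinj : ∀ i i' : ℕ, 1 ≤ i → i ≤ Fintype.card F - 1 → 1 ≤ i' →
        i' ≤ Fintype.card F - 1 → β i = β i' → i = i')
    (hβsurj : ∀ x : F, x ≠ 0 → ∃ i : ℕ, 1 ≤ i ∧ i ≤ Fintype.card F - 1 ∧ β i = x)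
    (k : ℕ → ℤ)
    (hk : ∀ i : ℕ, 1 ≤ i → i ≤ Fintype.card F - 1 →
        α ^ k i * (α - algebraMap F E (β i)) = 1)
    (φ : ℕ × ℕ → ℤ)
    (hφ1 : ∀ j : ℕ, 1 ≤ j → j ≤ t → φ (1, j) = (t : ℤ) - j)
    (hφ2 : ∀ j : ℕ, 1 ≤ j → j ≤ t → φ (2, j) = (t : ℤ) + j - 1)
    (hφ3 : ∀ i j : ℕ, 1 ≤ i → i ≤ Fintype.card F - 1 → 1 ≤ j → j ≤ t →
        φ (i + 2, j) = (t : ℤ) + (j : ℤ) * k i) :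
    ∀ (L : Finset (ℕ × ℕ)),
      L ⊆ Finset.Icc 1 (Fintype.card F + 1) ×ˢ Finset.Icc 1 t →
      LeftJustified L → L.card = t →
      ∀ v : ℕ × ℕ → F, ∃! γ : E, ∀ c ∈ L,
        Algebra.trace F E (γ * α ^ φ c) = v c :=
  runs_construction_is_OOA_general F E t ht hrank α hdeg β hβne hβinj k hk φ hφ1 hφ2 hφ3
end

section
/- Let S be a finite set of vectors in F_q^t with |S| = n ≥ t ≥ 1, such that every t-element subset of S is linearly independent over F_q (an (n,t)-set). Then n ≤ q + t − 1. -/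
/-!
Fix `t - 2` vectors `V ⊆ S`; they span a subspace `W` of codimension `2`. Since any `t` vectors
of `S` are independent, no two of the remaining vectors have proportional images in the plane
`E ⧸ W`, so they give distinct points of the projective line `ℙ (E ⧸ W)`, which has `q + 1`
points. Hence `n - (t - 2) ≤ q + 1`.
-/

open Finset Submodule Module
open scoped LinearAlgebra.Projectivization

namespace NTSet

variable {K E : Type*} [Field K] [AddCommGroup E] [Module K E]

theorem linearIndepOn_of_subset_of_card_le {t : ℕ} {S T : Finset E} (hn : t ≤ #S)
    (hind : ∀ T ⊆ S, #T = t → LinearIndepOn K id (T : Set E)) (hTS : T ⊆ S) (hT : #T ≤ t) :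
    LinearIndepOn K id (T : Set E) := by
  obtain ⟨U, hTU, hUS, hU⟩ := exists_subsuperset_card_eq hTS hT hn
  exact (hind U hUS hU).mono (mod_cast hTU)

theorem mkQ_ne_zero_of_linearIndepOn_insert {s : Set E} {w : E} (hw : w ∉ s)
    (hind : LinearIndepOn K id (insert w s)) : mkQ (span K s) w ≠ 0 := by
  simp [((linearIndepOn_id_insert hw).mp hind).2]

theorem mem_insert_of_linearIndepOn_of_smul_mkQ_eq {s : Set E} {w w' : E} {a : K}
    (hind : LinearIndepOn K id (insert w' (insert w s)))
    (hmk : a • mkQ (span K s) w = mkQ (span K s) w') : w' ∈ insert w s := by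
  by_contra hw'
  refine ((linearIndepOn_id_insert hw').mp hind).2 ?_
  have hsub : w' - a • w ∈ span K s := by
    rw [← Quotient.mk_eq_zero]
    simpa [sub_eq_zero] using hmk.symm
  have hle : span K s ≤ span K (insert w s) := span_mono (Set.subset_insert _ _)
  simpa using add_mem (hle hsub) (smul_mem _ a (subset_span (Set.mem_insert w s)))

theorem card_sdiff_le_card_projectivization [DecidableEq E] [Finite K] [FiniteDimensional K E]
    {s S : Finset E}
    (hind : ∀ w ∈ S, ∀ w' ∈ S, LinearIndepOn K id (insert w' (insert w (s : Set E)))) :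
    #(S \ s) ≤ Nat.card (ℙ K (E ⧸ span K (s : Set E))) := by
  have : Finite (ℙ K (E ⧸ span K (s : Set E))) :=
    (Projectivization.finite_iff_of_finite K _).mpr (Module.finite_of_finite K)
  have hne : ∀ w : ↥(S \ s), mkQ (span K (s : Set E)) (w : E) ≠ 0 := fun ⟨w, hw⟩ ↦ by
    rw [mem_sdiff] at hw
    exact mkQ_ne_zero_of_linearIndepOn_insert (mod_cast hw.2)
      (by simpa using hind w hw.1 w hw.1)
  rw [← Nat.card_eq_finsetCard]
  refine Nat.card_le_card_of_injective (fun w ↦ Projectivization.mk K _ (hne w)) ?_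
  rintro ⟨w, hw⟩ ⟨w', hw'⟩ h
  rw [mem_sdiff] at hw hw'
  obtain ⟨a, ha⟩ := (Projectivization.mk_eq_mk_iff' K _ _ (hne _) (hne _)).mp h.symm
  have hmem := mem_insert_of_linearIndepOn_of_smul_mkQ_eq (hind w hw.1 w' hw'.1) ha
  exact Subtype.ext ((Set.mem_insert_iff.mp hmem).resolve_right (mod_cast hw'.2)).symm

theorem card_le_of_forall_card_eq_linearIndepOn [Finite K] {t : ℕ} (hE : finrank K E = t)
    (ht : 2 ≤ t) {S : Finset E} (hn : t ≤ #S)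
    (hind : ∀ T ⊆ S, #T = t → LinearIndepOn K id (T : Set E)) :
    #S ≤ Nat.card K + t - 1 := by
  classical
  have : FiniteDimensional K E := Module.finite_of_finrank_pos (by omega)
  obtain ⟨V, hVS, hV⟩ := exists_subset_card_eq (s := S) (n := t - 2) (by omega)
  have hindV := linearIndepOn_of_subset_of_card_le hn hind hVS (by omega)
  have hquot : finrank K (E ⧸ span K (V : Set E)) = 2 := by
    have := finrank_quotient_add_finrank (span K (V : Set E))
    rw [finrank_span_finset_eq_card hindV, hV, hE] at this
    omega
  have hpairs : ∀ w ∈ S, ∀ w' ∈ S, LinearIndepOn K id (insert w' (insert w (V : Set E))) :=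
    fun w hw w' hw' ↦ mod_cast linearIndepOn_of_subset_of_card_le hn hind
      (insert_subset hw' (insert_subset hw hVS))
      ((card_insert_le _ _).trans (by have := card_insert_le w V; omega))
  have hsdiff := card_sdiff_le_card_projectivization hpairs
  rw [Projectivization.card_of_finrank_two K _ hquot] at hsdiff
  have := card_sdiff_add_card_eq_card hVS
  omega

end NTSet

theorem nt_set_bound_general
    (F : Type*) [Field F] [Fintype F]
    (t : ℕ)
    (S : Finset (Fin t → F))
    (hind : ∀ T : Finset (Fin t → F), T ⊆ S → T.card = t →
        LinearIndependent F (fun v : {x // x ∈ T} => (v : Fin t → F))) :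
    S.card ≤ Fintype.card F + t - 1 := by
  have hq : 2 ≤ Fintype.card F := Fintype.one_lt_card
  rcases le_or_gt t 1 with ht | ht
  · have hS : S.card ≤ Fintype.card F ^ t := by simpa using S.card_le_univ
    interval_cases t <;> simp only [pow_zero, pow_one] at hS <;> omega
  rcases le_or_gt t S.card with hn | hn
  · simpa [Nat.card_eq_fintype_card] using
      NTSet.card_le_of_forall_card_eq_linearIndepOn (finrank_fin_fun F) ht hn hind
  · omega

/-- if `S` is an `(n,t)`-set in `F_q^t` (every `t`-element
subset of `S` is linearly independent) with `n = |S| ≥ t ≥ 1`, then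
`n ≤ q + t - 1`. -/
theorem nt_set_bound
    (F : Type*) [Field F] [Fintype F]
    (t : ℕ) (ht : 1 ≤ t)
    (S : Finset (Fin t → F)) (hn : t ≤ S.card)
    (hind : ∀ T : Finset (Fin t → F), T ⊆ S → T.card = t →
        LinearIndependent F (fun v : {x // x ∈ T} => (v : Fin t → F))) :
    S.card ≤ Fintype.card F + t - 1 :=
  nt_set_bound_general F t S hind
end
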